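/- arXiv:2602.09048 — 7 statements merged into one kernel-verified Lean document; each statement's English description precedes it below -/
import Mathlib

section
/- Let F be a finite field with Q elements and let ψ be a nontrivial additive character of F with values in the complex numbers. Then for any two subsets U, V ⊆ F, the bilinear character sum satisfies |Σ_{v ∈ V} Σ_{u ∈ U} ψ(u·v)| ≤ √Q · √(|U|·|V|), where |U| and |V| denote the cardinalities of U and V. -/
/-!
For fixed `u ≠ u'` the characters `v ↦ ψ (u * v)` and `v ↦ ψ (u' * v)` are orthogonal, so
`∑ v, ‖∑ u ∈ U, ψ (u * v)‖ ^ 2 = Q * |U|` (Parseval). Cauchy–Schwarz over `v ∈ V` and extending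
the sum of squares to all of `F` give `‖∑ v ∈ V, ∑ u ∈ U, ψ (u * v)‖ ^ 2 ≤ |V| * Q * |U|`.
-/

open Finset

lemma norm_sum_sq_le_card_mul_sum_norm_sq {ι E : Type*} [SeminormedAddCommGroup E]
    (s : Finset ι) (f : ι → E) : ‖∑ i ∈ s, f i‖ ^ 2 ≤ #s * ∑ i ∈ s, ‖f i‖ ^ 2 :=
  (pow_le_pow_left₀ (norm_nonneg _) (norm_sum_le s f) 2).trans sq_sum_le_card_mul_sum_sq

namespace AddChar

variable {R K : Type*} [CommRing R] [Fintype R] [RCLike K]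

lemma norm_sum_mulShift_sq (ψ : AddChar R K) (U : Finset R) (v : R) :
    (‖∑ u ∈ U, ψ (u * v)‖ : K) ^ 2 = ∑ u ∈ U, ∑ u' ∈ U, ψ ((u - u') * v) := by
  rw [← RCLike.mul_conj, map_sum, sum_mul_sum]
  refine sum_congr rfl fun u _ => sum_congr rfl fun u' _ => ?_
  rw [← map_neg_eq_conj, ← map_add_eq_mul, sub_mul, sub_eq_add_neg]

theorem sum_norm_sum_mulShift_sq {ψ : AddChar R K} (hψ : IsPrimitive ψ) (U : Finset R) :
    ∑ v, ‖∑ u ∈ U, ψ (u * v)‖ ^ 2 = Fintype.card R * #U := by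
  classical
  have orthogonality (u u' : R) :
      ∑ v, ψ ((u - u') * v) = if u = u' then (Fintype.card R : K) else 0 := by
    simp_rw [mul_comm (u - u'), sum_mulShift _ hψ, sub_eq_zero, Nat.cast_ite, Nat.cast_zero]
  apply RCLike.ofReal_injective (K := K)
  push_cast
  simp_rw [norm_sum_mulShift_sq]
  calc ∑ v, ∑ u ∈ U, ∑ u' ∈ U, ψ ((u - u') * v)
      = ∑ u ∈ U, ∑ u' ∈ U, ∑ v, ψ ((u - u') * v) := by
        rw [sum_comm]
        exact sum_congr rfl fun _ _ => sum_comm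
    _ = Fintype.card R * #U := by
        simp only [orthogonality, sum_ite_eq, sum_ite_mem, inter_self, sum_const, nsmul_eq_mul]
        exact mul_comm _ _

end AddChar

/-- Let `F` be a finite field with `Q` elements and `ψ` a nontrivial
additive character of `F` with values in `ℂ`. Then for any two subsets `U, V ⊆ F`,
`|∑ v ∈ V, ∑ u ∈ U, ψ (u * v)| ≤ √Q * √(|U| * |V|)`. -/
theorem bilinear_character_sum_bound
    (F : Type*) [Field F] [Fintype F] (ψ : AddChar F ℂ) (hψ : ψ ≠ 1)
    (U V : Finset F) :
    ‖∑ v ∈ V, ∑ u ∈ U, ψ (u * v)‖ ≤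
      Real.sqrt (Fintype.card F) * Real.sqrt ((U.card : ℝ) * (V.card : ℝ)) := by
  rw [← Real.sqrt_mul (Nat.cast_nonneg _)]
  apply Real.le_sqrt_of_sq_le
  calc ‖∑ v ∈ V, ∑ u ∈ U, ψ (u * v)‖ ^ 2
      ≤ #V * ∑ v ∈ V, ‖∑ u ∈ U, ψ (u * v)‖ ^ 2 := norm_sum_sq_le_card_mul_sum_norm_sq _ _
    _ ≤ #V * ∑ v, ‖∑ u ∈ U, ψ (u * v)‖ ^ 2 := by
        gcongr
        exact subset_univ V
    _ = Fintype.card F * (#U * #V) := by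
        rw [AddChar.sum_norm_sum_mulShift_sq (AddChar.IsPrimitive.of_ne_one hψ)]
        ring
end

section
/- Let F be a finite field with Q elements, let ψ be a nontrivial additive character of F with values in the complex numbers, and let H be a subgroup of the multiplicative group Fˣ. Then |Σ_{u ∈ H} ψ(u)| ≤ √Q. -/
/-!
Put `f t = ∑ u ∈ H, ψ (t u)`. Orthogonality of the characters `x ↦ ψ (t x)` gives the
Parseval identity `∑ₜ |f t|² = |H| Q`, while `f` is constant, equal to the sum in question, on
the `|H|` points `t ∈ H`. Hence `|H| · |∑ u ∈ H, ψ u|² ≤ |H| Q`.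
-/

namespace AddChar

variable {R K : Type*} [CommRing R] [RCLike K]

theorem sum_subgroup_mul (ψ : AddChar R K) (H : Subgroup Rˣ) [Fintype H] (t : H) :
    ∑ u : H, ψ ((t : Rˣ) * (u : Rˣ) : R) = ∑ u : H, ψ ((u : Rˣ) : R) :=
  Fintype.sum_bijective (t * ·) (Group.mulLeft_bijective t) _ _ fun _ => rfl

variable [Fintype R]

theorem sum_mul_conj_sum_mulShift {ι : Type*} [Fintype ι] {ψ : AddChar R K}
    (hψ : ψ.IsPrimitive) {g : ι → R} (hg : g.Injective) :
    ∑ t : R, (∑ i, ψ (t * g i)) * starRingEnd K (∑ i, ψ (t * g i))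
      = Fintype.card ι * Fintype.card R := by
  classical
  have hdiag : ∀ i j,
      ∑ t : R, ψ (t * (g i - g j)) = if j = i then (Fintype.card R : K) else 0 :=
    fun i j => by
      simp only [sum_mulShift _ hψ, sub_eq_zero, hg.eq_iff, eq_comm, Nat.cast_ite, Nat.cast_zero]
  calc ∑ t : R, (∑ i, ψ (t * g i)) * starRingEnd K (∑ i, ψ (t * g i))
      = ∑ i, ∑ j, ∑ t : R, ψ (t * (g i - g j)) := by
        simp_rw [map_sum, Finset.sum_mul_sum, ← map_neg_eq_conj, ← map_add_eq_mul, mul_sub,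
          sub_eq_add_neg]
        rw [Finset.sum_comm]
        exact Finset.sum_congr rfl fun _ _ => Finset.sum_comm
    _ = Fintype.card ι * Fintype.card R := by
        simp [hdiag, Finset.card_univ]

theorem sum_norm_sq_sum_mulShift {ι : Type*} [Fintype ι] {ψ : AddChar R K}
    (hψ : ψ.IsPrimitive) {g : ι → R} (hg : g.Injective) :
    ∑ t : R, ‖∑ i, ψ (t * g i)‖ ^ 2 = Fintype.card ι * Fintype.card R := by
  have h := sum_mul_conj_sum_mulShift hψ hg
  simp_rw [RCLike.mul_conj] at h
  exact_mod_cast h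

theorem norm_sum_subgroup_le_sqrt_card {ψ : AddChar R K} (hψ : ψ.IsPrimitive)
    (H : Subgroup Rˣ) [Fintype H] :
    ‖∑ u : H, ψ ((u : Rˣ) : R)‖ ≤ Real.sqrt (Fintype.card R) := by
  classical
  set S := ∑ u : H, ψ ((u : Rˣ) : R)
  set f : R → K := fun t => ∑ u : H, ψ (t * (u : Rˣ))
  have hinj : Function.Injective (fun u : H => ((u : Rˣ) : R)) :=
    fun _ _ h => Subtype.ext (Units.ext h)
  have hH : (0 : ℝ) < Fintype.card H := by positivity
  have hsq : Fintype.card H * ‖S‖ ^ 2 ≤ Fintype.card H * (Fintype.card R : ℝ) :=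
    calc Fintype.card H * ‖S‖ ^ 2
        = ∑ t ∈ Finset.univ.image (fun u : H => ((u : Rˣ) : R)), ‖f t‖ ^ 2 := by
          simp [Finset.sum_image fun a _ b _ h => hinj h, f, sum_subgroup_mul, S]
      _ ≤ ∑ t : R, ‖f t‖ ^ 2 :=
          Finset.sum_le_sum_of_subset_of_nonneg (Finset.subset_univ _) fun _ _ _ => sq_nonneg _
      _ = Fintype.card H * Fintype.card R := sum_norm_sq_sum_mulShift hψ hinj
  exact Real.le_sqrt_of_sq_le (le_of_mul_le_mul_left hsq hH)

end AddChar

open scoped Classical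

/-- Let `F` be a finite field with `Q` elements, `ψ` a nontrivial
additive character of `F` with values in `ℂ`, and `H` a subgroup of `Fˣ`. Then
`|∑ u ∈ H, ψ u| ≤ √Q`. -/
theorem character_sum_over_subgroup_bound
    (F : Type*) [Field F] [Fintype F] (ψ : AddChar F ℂ) (hψ : ψ ≠ 1)
    (H : Subgroup Fˣ) :
    ‖∑ u : H, ψ ((u : Fˣ) : F)‖ ≤ Real.sqrt (Fintype.card F) :=
  AddChar.norm_sum_subgroup_le_sqrt_card (AddChar.IsPrimitive.of_ne_one hψ) H
end

section
/- For every integer n ≥ 10, the Euler totient function satisfies φ(n)/n ≥ 3 / (e^γ · π² · log log n), where γ is the Euler–Mascheroni constant and log denotes the natural logarithm. -/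
/-!
Since `φ(n)/n = ∏_{p ∣ n} (1 - 1/p)` and `1 - 1/p = (1 - 1/p²) / (1 + 1/p)`, the Euler product
for `ζ(2) = π²/6` gives `φ(n)/n ≥ (6/π²) · exp (-∑_{p ∣ n} 1/p)`. Fewer than `log n / log y`
prime factors of `n` exceed `y = log n`, so they contribute at most `1 / log log n` to the sum;
the others contribute at most `∑_{p ≤ y} 1/p ≤ log log y + 9/10`. This explicit form of Mertens'
second theorem follows by partial summation from `∑_{p ≤ x} log p / p ≤ log x + 9/20`, itself a
consequence of Legendre's formula for `log x!`, Stirling's bound and Chebyshev's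
`θ(x) ≤ x log 4`. As `γ > 1/2`, this suffices once `n ≥ 2·3·5·…·19 = 9699690`. Smaller `n` have
at most seven prime factors, and then `φ(n)/n` is at least the product of `1 - 1/p` over the
first seven primes (the first three when `n < 210`).
-/

open Finset Real
open ArithmeticFunction hiding log
open scoped Nat

lemma le_log_of_two_pow (k : ℕ) {x : ℝ} (hx : 0 < x) :
    k * log 2 + (1 - 2 ^ k / x) ≤ log x := by
  have h := one_sub_inv_le_log_of_pos (div_pos hx (by positivity : (0 : ℝ) < 2 ^ k))
  rw [inv_div, log_div hx.ne' (by positivity), log_pow] at h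
  linarith

lemma log_le_of_two_pow (k : ℕ) {x : ℝ} (hx : 0 < x) :
    log x ≤ k * log 2 + (x / 2 ^ k - 1) := by
  have h := log_le_sub_one_of_pos (div_pos hx (by positivity : (0 : ℝ) < 2 ^ k))
  rw [log_div hx.ne' (by positivity), log_pow] at h
  linarith

noncomputable def invSqHom : ℕ →* ℝ where
  toFun m := ((m : ℝ) ^ 2)⁻¹
  map_one' := by simp
  map_mul' m n := by push_cast; ring

lemma prod_inv_one_sub_inv_sq_le (s : Finset ℕ) :
    ∏ p ∈ s with p.Prime, (1 - ((p : ℝ) ^ 2)⁻¹)⁻¹ ≤ π ^ 2 / 6 := by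
  have hsum : Summable invSqHom :=
    (by simpa only [one_div] using hasSum_zeta_two.summable :
      Summable fun m : ℕ => ((m : ℝ) ^ 2)⁻¹)
  change ∏ p ∈ s with p.Prime, (1 - invSqHom p)⁻¹ ≤ π ^ 2 / 6
  rw [EulerProduct.prod_filter_prime_geometric_eq_tsum_factoredNumbers hsum,
    ← hasSum_zeta_two.tsum_eq]
  simp only [one_div]
  exact hsum.tsum_subtype_le _ _ fun m => inv_nonneg.mpr (sq_nonneg (m : ℝ))

lemma totient_div_self_eq_prod {n : ℕ} (hn : n ≠ 0) :
    (n.totient : ℝ) / n = ∏ p ∈ n.primeFactors, (1 - (p : ℝ)⁻¹) := by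
  have h := congrArg (Rat.cast (K := ℝ)) (Nat.totient_eq_mul_prod_factors n)
  push_cast at h
  rw [h, mul_div_cancel_left₀ _ (by exact_mod_cast hn)]

lemma totient_div_self_ge {n : ℕ} (hn : n ≠ 0) :
    6 / π ^ 2 * exp (-∑ p ∈ n.primeFactors, (p : ℝ)⁻¹) ≤ (n.totient : ℝ) / n := by
  have htwo : ∀ p ∈ n.primeFactors, (2 : ℝ) ≤ p := fun p hp => by
    exact_mod_cast (Nat.prime_of_mem_primeFactors hp).two_le
  have hsq : ∀ p ∈ n.primeFactors, 0 < 1 - ((p : ℝ) ^ 2)⁻¹ := fun p hp => by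
    have := htwo p hp
    have : ((p : ℝ) ^ 2)⁻¹ < 1 := inv_lt_one_of_one_lt₀ (by nlinarith)
    linarith
  have hfactor : ∀ p ∈ n.primeFactors,
      1 - (p : ℝ)⁻¹ = (1 - ((p : ℝ) ^ 2)⁻¹) * (1 + (p : ℝ)⁻¹)⁻¹ := fun p hp => by
    have := htwo p hp
    field_simp
    ring
  have hzeta : 6 / π ^ 2 ≤ ∏ p ∈ n.primeFactors, (1 - ((p : ℝ) ^ 2)⁻¹) := by
    have h := prod_inv_one_sub_inv_sq_le n.primeFactors
    rw [filter_true_of_mem fun p hp => Nat.prime_of_mem_primeFactors hp, prod_inv_distrib] at h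
    rw [← inv_div]
    exact inv_le_of_inv_le₀ (prod_pos hsq) h
  have hexp : exp (-∑ p ∈ n.primeFactors, (p : ℝ)⁻¹) ≤
      ∏ p ∈ n.primeFactors, (1 + (p : ℝ)⁻¹)⁻¹ := by
    rw [prod_inv_distrib, exp_neg]
    exact inv_anti₀ (prod_pos fun p _ => by positivity)
      (prod_one_add_le_exp_sum _ fun p => by positivity)
  rw [totient_div_self_eq_prod hn, prod_congr rfl hfactor, prod_mul_distrib]
  exact mul_le_mul hzeta hexp (by positivity) (prod_nonneg fun p hp => (hsq p hp).le)

noncomputable def primeHarmonic (M : ℕ) : ℝ := ∑ p ∈ Nat.primesLE M, (p : ℝ)⁻¹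

noncomputable def logPrimeHarmonic (M : ℕ) : ℝ := ∑ p ∈ Nat.primesLE M, log p / p

lemma primeHarmonic_mono : Monotone primeHarmonic := fun _ _ h =>
  sum_le_sum_of_subset_of_nonneg (Nat.primesLE_mono h) fun _ _ _ => by positivity

lemma sum_inv_primeFactors_gt_le {n : ℕ} (hn : n ≠ 0) {x : ℝ} (hx : 1 < x) :
    ∑ p ∈ n.primeFactors with x < (p : ℕ), (p : ℝ)⁻¹ ≤ log n / (x * log x) := by
  set s := n.primeFactors.filter fun p : ℕ => x < p
  have hlogx : 0 < log x := log_pos hx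
  have hcard : #s * log x ≤ log n := by
    have hprod : ∏ p ∈ s, p ≤ n := Nat.le_of_dvd (Nat.pos_of_ne_zero hn)
      ((prod_dvd_prod_of_subset _ _ _ (filter_subset _ _)).trans (Nat.prod_primeFactors_dvd n))
    calc #s * log x = ∑ p ∈ s, log x := by rw [sum_const, nsmul_eq_mul]
      _ ≤ ∑ p ∈ s, log p :=
        sum_le_sum fun p hp => log_le_log (by linarith) (mem_filter.mp hp).2.le
      _ = log (∏ p ∈ s, (p : ℝ)) := by
        rw [log_prod fun p hp => by linarith [(mem_filter.mp hp).2]]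
      _ ≤ log n := log_le_log (prod_pos fun p hp => by linarith [(mem_filter.mp hp).2])
        (by rw [← Nat.cast_prod]; exact_mod_cast hprod)
  calc ∑ p ∈ s, (p : ℝ)⁻¹ ≤ ∑ p ∈ s, x⁻¹ :=
        sum_le_sum fun p hp => inv_anti₀ (by linarith) (mem_filter.mp hp).2.le
    _ = #s * log x / (x * log x) := by
        rw [sum_const, nsmul_eq_mul]
        field_simp
    _ ≤ log n / (x * log x) := by gcongr

lemma sum_inv_primeFactors_le_primeHarmonic (n : ℕ) (y : ℝ) :
    ∑ p ∈ n.primeFactors with ((p : ℕ) : ℝ) ≤ y, (p : ℝ)⁻¹ ≤ primeHarmonic ⌊y⌋₊ := by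
  refine sum_le_sum_of_subset_of_nonneg (fun p hp => ?_) fun p _ _ => by positivity
  obtain ⟨hpn, hpy⟩ := mem_filter.mp hp
  exact Nat.mem_primesLE.mpr ⟨Nat.le_floor hpy, Nat.prime_of_mem_primeFactors hpn⟩

lemma sum_inv_primeFactors_le {n : ℕ} (hn : 3 ≤ n) :
    ∑ p ∈ n.primeFactors, (p : ℝ)⁻¹ ≤ primeHarmonic ⌊log n⌋₊ + 1 / log (log n) := by
  have hlog : 1 < log n := by
    rw [lt_log_iff_exp_lt (by positivity)]
    have : (3 : ℝ) ≤ n := by exact_mod_cast hn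
    linarith [exp_one_lt_d9]
  rw [← sum_filter_add_sum_filter_not _ fun p : ℕ => (p : ℝ) ≤ log n]
  gcongr
  · exact sum_inv_primeFactors_le_primeHarmonic n _
  · simp_rw [not_le]
    refine (sum_inv_primeFactors_gt_le (by omega) hlog).trans_eq ?_
    rw [← div_div, div_self (by positivity)]

lemma log_factorial_le {N : ℕ} (hN : N ≠ 0) : log N ! ≤ N * log N - N + log N / 2 + 1 := by
  obtain ⟨m, rfl⟩ := Nat.exists_eq_succ_of_ne_zero hN
  have h := Stirling.log_stirlingSeq'_antitone (Nat.zero_le m)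
  simp only [Function.comp_apply, Stirling.stirlingSeq_one] at h
  rw [Stirling.log_stirlingSeq_formula, log_div (exp_pos 1).ne' (by positivity), log_exp,
    log_sqrt zero_le_two, log_mul two_ne_zero (by positivity),
    log_div (by positivity) (exp_pos 1).ne', log_exp] at h
  push_cast at h ⊢
  linarith

lemma sum_log_mul_div_le_log_factorial (N : ℕ) :
    ∑ p ∈ Nat.primesLE N, log p * (N / p : ℕ) ≤ log N ! := by
  have legendre : ∑ d ∈ Ioc 0 N, Λ d * (N / d : ℕ) = log N ! := by
    rw [← sum_Ioc_mul_zeta_eq_sum, vonMangoldt_mul_zeta]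
    simp_rw [ArithmeticFunction.log_apply]
    rw [← log_prod fun m hm => by have := (mem_Ioc.mp hm).1; positivity, ← Nat.cast_prod,
      show Ioc 0 N = Ico 1 (N + 1) by ext; simp; omega, prod_Ico_id_eq_factorial]
  rw [← legendre]
  refine (sum_congr rfl fun p hp => ?_).trans_le
    (sum_le_sum_of_subset_of_nonneg (fun p hp => ?_)
      fun d _ _ => mul_nonneg vonMangoldt_nonneg (Nat.cast_nonneg _))
  · rw [vonMangoldt_apply_prime (Nat.prime_of_mem_primesLE hp)]
  · exact mem_Ioc.mpr ⟨(Nat.prime_of_mem_primesLE hp).pos, Nat.le_of_mem_primesLE hp⟩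

lemma logPrimeHarmonic_le {N : ℕ} (hN : 100 ≤ N) : logPrimeHarmonic N ≤ log N + 9 / 20 := by
  have hN0 : (0 : ℝ) < N := by positivity
  have hfloor : N * logPrimeHarmonic N - Chebyshev.theta N ≤
      ∑ p ∈ Nat.primesLE N, log p * (N / p : ℕ) := by
    rw [logPrimeHarmonic, Chebyshev.theta_eq_sum_primesLE_log, mul_sum, ← sum_sub_distrib]
    refine sum_le_sum fun p hp => ?_
    have hp := (Nat.prime_of_mem_primesLE hp).pos
    have hdiv : (N : ℝ) / p - 1 ≤ (N / p : ℕ) := by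
      have : (N : ℝ) < (N / p : ℕ) * p + p := by
        exact_mod_cast Nat.lt_div_mul_add (a := N) hp
      rw [div_sub_one (by positivity), div_le_iff₀ (by positivity)]
      linarith
    calc (N : ℝ) * (log p / p) - log p = log p * (N / p - 1) := by field_simp
      _ ≤ log p * (N / p : ℕ) := by gcongr
  have htheta := Chebyshev.theta_le_log4_mul_x hN0.le
  have hfact := log_factorial_le (by omega : N ≠ 0)
  have hlegendre := sum_log_mul_div_le_log_factorial N
  have hlogN := log_le_of_two_pow 4 hN0
  have hlog4 : log 4 = 2 * log 2 := by
    rw [show (4 : ℝ) = 2 ^ 2 by norm_num, log_pow, Nat.cast_ofNat]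
  have hNR : (100 : ℝ) ≤ N := by exact_mod_cast hN
  -- `N · A(N) ≤ log N! + θ(N) ≤ N log N - N + log N / 2 + 1 + N log 4`
  rw [← mul_le_mul_iff_of_pos_left hN0]
  push_cast at hlogN
  nlinarith [mul_le_mul_of_nonneg_right log_two_lt_d9.le hN0.le, log_two_gt_d9]

lemma primeHarmonic_sub_logPrimeHarmonic_div_succ (M : ℕ) :
    primeHarmonic (M + 1) - logPrimeHarmonic (M + 1) / log (M + 1 : ℕ) =
      primeHarmonic M - logPrimeHarmonic M / log (M + 1 : ℕ) := by
  unfold primeHarmonic logPrimeHarmonic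
  rw [Nat.primesLE_succ]
  split_ifs with hp
  · have hlog : log (M + 1 : ℕ) ≠ 0 := (log_pos (by exact_mod_cast hp.one_lt)).ne'
    have hnot : M + 1 ∉ Nat.primesLE M := fun h => by
      have := Nat.le_of_mem_primesLE h
      omega
    rw [sum_insert hnot, sum_insert hnot]
    field_simp
    ring
  · rfl

/-- The discrete analogue of `∑_{p ≤ x} 1/p = A(x) / log x + ∫_2^x A(t) / (t log² t) dt` with
`A = logPrimeHarmonic`: for `A(t) ≤ log t + a` the integral is at most `log log x + O(1)`. -/
noncomputable def mertensGap (a : ℝ) (M : ℕ) : ℝ :=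
  primeHarmonic M - (logPrimeHarmonic M - a) / log M - log (log M)

lemma mertensGap_succ_le {a : ℝ} {M : ℕ} (hM : 2 ≤ M) (hA : logPrimeHarmonic M ≤ log M + a) :
    mertensGap a (M + 1) ≤ mertensGap a M := by
  set L := log M
  set L' := log (M + 1 : ℕ)
  have hL : 0 < L := log_pos (by exact_mod_cast hM)
  have hLL' : L ≤ L' := log_le_log (by positivity) (by exact_mod_cast M.le_succ)
  have hL' : 0 < L' := hL.trans_le hLL'
  have hstep := primeHarmonic_sub_logPrimeHarmonic_div_succ M
  have hloglog : 1 - L / L' ≤ log L' - log L := by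
    have := log_le_sub_one_of_pos (div_pos hL hL')
    rw [log_div hL.ne' hL'.ne'] at this
    linarith
  have hdrift : (logPrimeHarmonic M - a) * (1 / L - 1 / L') ≤ 1 - L / L' :=
    calc (logPrimeHarmonic M - a) * (1 / L - 1 / L') ≤ L * (1 / L - 1 / L') :=
          mul_le_mul_of_nonneg_right (by linarith)
            (sub_nonneg.mpr (one_div_le_one_div_of_le hL hLL'))
      _ = 1 - L / L' := by field_simp
  have hsplit : (logPrimeHarmonic M - a) * (1 / L - 1 / L') =
      (logPrimeHarmonic M - a) / L - (logPrimeHarmonic M - a) / L' := by ring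
  unfold mertensGap
  rw [sub_div, sub_div] at *
  linarith

lemma primesLE_hundred : Nat.primesLE 100 =
    {2, 3, 5, 7, 11, 13, 17, 19, 23, 29, 31, 37, 41, 43, 47, 53, 59, 61, 67, 71, 73, 79, 83, 89,
      97} := by
  decide +kernel

lemma primeHarmonic_hundred_le : primeHarmonic 100 ≤ 1.8029 := by
  rw [primeHarmonic, primesLE_hundred]
  norm_num

lemma natLog_two_mul_log_two_le (p : ℕ) : Nat.log 2 p * log 2 ≤ log p := by
  rcases Nat.eq_zero_or_pos p with rfl | hp
  · simp
  rw [← log_pow]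
  exact log_le_log (by positivity) (by exact_mod_cast Nat.pow_log_le_self 2 hp.ne')

lemma logPrimeHarmonic_hundred_ge : 2.8 ≤ logPrimeHarmonic 100 :=
  calc (2.8 : ℝ) ≤ (∑ p ∈ Nat.primesLE 100, (Nat.log 2 p : ℝ) / p) * log 2 := by
        rw [primesLE_hundred]
        norm_num
        nlinarith [log_two_gt_d9]
    _ ≤ logPrimeHarmonic 100 := by
        rw [sum_mul]
        refine sum_le_sum fun p _ => ?_
        rw [div_mul_eq_mul_div]
        gcongr
        exact natLog_two_mul_log_two_le p

lemma mertensGap_hundred_le : mertensGap (9 / 20) 100 ≤ -1 / 10 := by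
  have hlog_ge : (4.5 : ℝ) ≤ log 100 := by
    have := le_log_of_two_pow 6 (by norm_num : (0 : ℝ) < 100)
    norm_num at this
    linarith [log_two_gt_d9]
  have hlog_le : log 100 ≤ (4.7 : ℝ) := by
    have := log_le_of_two_pow 7 (by norm_num : (0 : ℝ) < 100)
    norm_num at this
    linarith [log_two_lt_d9]
  have hloglog : (1.45 : ℝ) ≤ log (log 100) := by
    have := le_log_of_two_pow 2 (by norm_num : (0 : ℝ) < 4.5)
    have := log_le_log (by norm_num) hlog_ge
    norm_num at *
    linarith [log_two_gt_d9]
  have hA := logPrimeHarmonic_hundred_ge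
  have : (2.8 - 9 / 20) / 4.7 ≤ (logPrimeHarmonic 100 - 9 / 20) / log 100 :=
    div_le_div₀ (by linarith) (by linarith) (by linarith) hlog_le
  have := primeHarmonic_hundred_le
  unfold mertensGap
  norm_num at *
  linarith

lemma primeHarmonic_le_log_log {M : ℕ} (hM : 100 ≤ M) :
    primeHarmonic M ≤ log (log M) + 9 / 10 := by
  have hgap : mertensGap (9 / 20) M ≤ mertensGap (9 / 20) 100 := by
    induction M, hM using Nat.le_induction with
    | base => exact le_rfl
    | succ M hM ih => exact (mertensGap_succ_le (by omega) (logPrimeHarmonic_le hM)).trans ih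
  have hL : 0 < log M := log_pos (by exact_mod_cast (by omega : 1 < M))
  have hA : (logPrimeHarmonic M - 9 / 20) / log M ≤ 1 :=
    (div_le_one hL).mpr (by linarith [logPrimeHarmonic_le hM])
  have := hgap.trans mertensGap_hundred_le
  unfold mertensGap at this
  linarith

lemma primeHarmonic_floor_add_inv_le {y : ℝ} (hy : 16 ≤ y) :
    primeHarmonic ⌊y⌋₊ + 1 / log y ≤ log 2 + 1 / 2 + log (log y) := by
  have hlog16 : log 16 = 4 * log 2 := by
    rw [show (16 : ℝ) = 2 ^ 4 by norm_num, log_pow, Nat.cast_ofNat]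
  have hu : 4 * log 2 ≤ log y := hlog16 ▸ log_le_log (by norm_num) hy
  have hu0 : 0 < log y := by linarith [log_two_gt_d9]
  rcases le_total ⌊y⌋₊ 100 with hB | hB
  · have hloglog : 1 ≤ log (log y) := by
      rw [le_log_iff_exp_le hu0]
      linarith [exp_one_lt_d9, log_two_gt_d9]
    have hinv : 1 / log y ≤ 1 / (4 * 0.6931471803) :=
      one_div_le_one_div_of_le (by norm_num) (by linarith [log_two_gt_d9])
    linarith [primeHarmonic_mono hB, primeHarmonic_hundred_le, log_two_gt_d9]
  · have hB0 : (0 : ℝ) < ⌊y⌋₊ := by exact_mod_cast (by omega : 0 < ⌊y⌋₊)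
    have hlogB : log ⌊y⌋₊ ≤ log y := log_le_log hB0 (Nat.floor_le (by linarith))
    have hlogB_ge : (4.5 : ℝ) ≤ log ⌊y⌋₊ := by
      have := le_log_of_two_pow 6 hB0
      have : (2 : ℝ) ^ 6 / ⌊y⌋₊ ≤ 2 ^ 6 / 100 := by gcongr; exact_mod_cast hB
      push_cast at *
      linarith [log_two_gt_d9]
    have hinv : 1 / log y ≤ 1 / 4.5 := one_div_le_one_div_of_le (by norm_num) (by linarith)
    have := log_le_log (by linarith) hlogB
    linarith [primeHarmonic_le_log_log hB, log_two_gt_d9]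

lemma three_div_le_totient_div_self_of_large {n : ℕ} (hn : 9699690 ≤ n) :
    3 / (exp eulerMascheroniConstant * π ^ 2 * log (log n)) ≤ (n.totient : ℝ) / n := by
  have hy : (16 : ℝ) ≤ log n := by
    have := le_log_of_two_pow 23 (by positivity : (0 : ℝ) < n)
    have : (2 : ℝ) ^ 23 / n ≤ 2 ^ 23 / 9699690 := by gcongr; exact_mod_cast hn
    push_cast at *
    linarith [log_two_gt_d9]
  have hu : 0 < log (log n) := log_pos (by linarith)
  have hS :=
    (sum_inv_primeFactors_le (by omega : 3 ≤ n)).trans (primeHarmonic_floor_add_inv_le hy)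
  refine le_trans ?_ (totient_div_self_ge (by omega))
  calc 3 / (exp eulerMascheroniConstant * π ^ 2 * log (log n))
      = 6 / π ^ 2 * exp (-(log 2 + eulerMascheroniConstant + log (log (log n)))) := by
        rw [exp_neg, exp_add, exp_add, exp_log two_pos, exp_log hu]
        field_simp
        ring
    _ ≤ 6 / π ^ 2 * exp (-∑ p ∈ n.primeFactors, (p : ℝ)⁻¹) := by
        gcongr
        linarith [one_half_lt_eulerMascheroniConstant]

lemma nth_prime_card_le {s : Finset ℕ} (hs : ∀ p ∈ s, p.Prime) {q : ℕ} (hq : q.Prime)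
    (hsq : ∀ p ∈ s, p < q) : Nat.nth Nat.Prime #s ≤ q := by
  have hcard : #s ≤ Nat.count Nat.Prime q := by
    rw [Nat.count_eq_card_filter_range]
    exact card_le_card fun p hp => mem_filter.mpr ⟨mem_range.mpr (hsq p hp), hs p hp⟩
  calc Nat.nth Nat.Prime #s ≤ Nat.nth Nat.Prime (Nat.count Nat.Prime q) :=
        (Nat.nth_le_nth Nat.infinite_setOfPred_prime).mpr hcard
    _ = q := Nat.nth_count hq

lemma prod_nth_prime_le_prod {R : Type*} [CommSemiring R] [PartialOrder R] [IsOrderedRing R]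
    {g : ℕ → R} (hg : MonotoneOn g {p | p.Prime}) (hg0 : ∀ p, p.Prime → 0 ≤ g p)
    {s : Finset ℕ} (hs : ∀ p ∈ s, p.Prime) :
    ∏ i ∈ range #s, g (Nat.nth Nat.Prime i) ≤ ∏ p ∈ s, g p := by
  induction s using Finset.induction_on_max with
  | empty => simp
  | insert a s hlt ih =>
    have ha : a ∉ s := fun h => (hlt a h).false
    have hs' : ∀ p ∈ s, p.Prime := fun p hp => hs p (mem_insert_of_mem hp)
    have hnth : g (Nat.nth Nat.Prime #s) ≤ g a :=
      hg (Nat.prime_nth_prime _) (hs a (mem_insert_self a s))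
        (nth_prime_card_le hs' (hs a (mem_insert_self a s)) hlt)
    rw [card_insert_of_notMem ha, prod_range_succ, prod_insert ha, mul_comm (g a)]
    exact mul_le_mul (ih hs') hnth (hg0 _ (Nat.prime_nth_prime _))
      (prod_nonneg fun p hp => hg0 p (hs' p hp))

lemma card_primeFactors_le_of_lt_prod {n k : ℕ}
    (hn : n < ∏ i ∈ range (k + 1), Nat.nth Nat.Prime i) : #n.primeFactors ≤ k := by
  by_contra! hk
  have hn0 : n ≠ 0 := by rintro rfl; simp at hk
  have hprimes := prod_nth_prime_le_prod (g := id) monotoneOn_id (fun p _ => Nat.zero_le p)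
    (s := n.primeFactors) fun p hp => Nat.prime_of_mem_primeFactors hp
  have hsub : ∏ i ∈ range (k + 1), Nat.nth Nat.Prime i ≤
      ∏ i ∈ range #n.primeFactors, Nat.nth Nat.Prime i :=
    prod_le_prod_of_subset_of_one_le' (range_subset_range.mpr hk)
      fun i _ _ => (Nat.prime_nth_prime i).one_lt.le
  have := Nat.le_of_dvd (Nat.pos_of_ne_zero hn0) (Nat.prod_primeFactors_dvd n)
  simp only [id] at hprimes
  omega

lemma prod_nth_prime_le_totient_div_self {n k : ℕ} (hn0 : n ≠ 0)
    (hn : n < ∏ i ∈ range (k + 1), Nat.nth Nat.Prime i) :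
    ∏ i ∈ range k, (1 - (Nat.nth Nat.Prime i : ℝ)⁻¹) ≤ (n.totient : ℝ) / n := by
  have hfac : ∀ p : ℕ, p.Prime → 0 ≤ 1 - (p : ℝ)⁻¹ ∧ 1 - (p : ℝ)⁻¹ ≤ 1 := fun p hp => by
    have : (1 : ℝ) ≤ p := by exact_mod_cast hp.one_lt.le
    exact ⟨by linarith [inv_le_one_of_one_le₀ this],
      by linarith [inv_nonneg.mpr (zero_le_one.trans this)]⟩
  have hmono : MonotoneOn (fun p : ℕ => 1 - (p : ℝ)⁻¹) {p | p.Prime} := fun p hp q _ hpq => by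
    have : (0 : ℝ) < p := by exact_mod_cast (show p.Prime from hp).pos
    simp only [sub_le_sub_iff_left]
    exact inv_anti₀ this (by exact_mod_cast hpq)
  rw [totient_div_self_eq_prod hn0,
    ← prod_range_mul_prod_Ico _ (card_primeFactors_le_of_lt_prod hn)]
  refine (mul_le_of_le_one_right ?_ ?_).trans (prod_nth_prime_le_prod hmono
    (fun p hp => (hfac p hp).1) fun p hp => Nat.prime_of_mem_primeFactors hp)
  · exact prod_nonneg fun i _ => (hfac _ (Nat.prime_nth_prime i)).1
  · exact prod_le_one (fun i _ => (hfac _ (Nat.prime_nth_prime i)).1)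
      fun i _ => (hfac _ (Nat.prime_nth_prime i)).2

lemma Nat.nth_prime_five_eq_thirteen : Nat.nth Nat.Prime 5 = 13 := by
  simpa [show Nat.count Nat.Prime 13 = 5 by decide]
    using Nat.nth_count (p := Nat.Prime) (n := 13) (by norm_num)

lemma Nat.nth_prime_six_eq_seventeen : Nat.nth Nat.Prime 6 = 17 := by
  simpa [show Nat.count Nat.Prime 17 = 6 by decide]
    using Nat.nth_count (p := Nat.Prime) (n := 17) (by norm_num)

lemma Nat.nth_prime_seven_eq_nineteen : Nat.nth Nat.Prime 7 = 19 := by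
  simpa [show Nat.count Nat.Prime 19 = 7 by decide]
    using Nat.nth_count (p := Nat.Prime) (n := 19) (by norm_num)

lemma sixteen_le_exp_eulerMascheroniConstant_mul_pi_sq :
    16 ≤ exp eulerMascheroniConstant * π ^ 2 := by
  have hexp : (1.625 : ℝ) ≤ exp eulerMascheroniConstant := by
    have h := quadratic_le_exp_of_nonneg (x := 1 / 2) (by norm_num)
    norm_num at h
    linarith [exp_le_exp.mpr one_half_lt_eulerMascheroniConstant.le]
  have hpi : (3.14 : ℝ) ^ 2 ≤ π ^ 2 := by gcongr; exact pi_gt_d2.le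
  nlinarith

lemma three_div_le_of_three_le_sixteen_mul {c u : ℝ} (hu : 0 < u) (h : 3 ≤ 16 * c * u) :
    3 / (exp eulerMascheroniConstant * π ^ 2 * u) ≤ c := by
  rw [div_le_iff₀ (by positivity)]
  nlinarith [sixteen_le_exp_eulerMascheroniConstant_mul_pi_sq]

lemma three_div_le_totient_div_self_of_lt_210 {n : ℕ} (hn : 10 ≤ n) (h : n < 210) :
    3 / (exp eulerMascheroniConstant * π ^ 2 * log (log n)) ≤ (n.totient : ℝ) / n := by
  have hlog : (2.25 : ℝ) ≤ log n := by
    have := le_log_of_two_pow 3 (by norm_num : (0 : ℝ) < 10)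
    have := log_le_log (by norm_num) (by exact_mod_cast hn : (10 : ℝ) ≤ n)
    norm_num at *
    linarith [log_two_gt_d9]
  have hu : (0.8 : ℝ) ≤ log (log n) := by
    have := le_log_of_two_pow 1 (by norm_num : (0 : ℝ) < 2.25)
    have := log_le_log (by norm_num) hlog
    norm_num at *
    linarith [log_two_gt_d9]
  have hc := prod_nth_prime_le_totient_div_self (n := n) (k := 3) (by omega) (by
    simpa [prod_range_succ, Nat.nth_prime_zero_eq_two, Nat.nth_prime_one_eq_three,
      Nat.nth_prime_two_eq_five, Nat.nth_prime_three_eq_seven] using h)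
  simp only [prod_range_succ, prod_range_zero, Nat.nth_prime_zero_eq_two,
    Nat.nth_prime_one_eq_three, Nat.nth_prime_two_eq_five] at hc
  refine (three_div_le_of_three_le_sixteen_mul (by linarith) ?_).trans hc
  norm_num
  linarith

lemma three_div_le_totient_div_self_of_lt_9699690 {n : ℕ} (hn : 210 ≤ n) (h : n < 9699690) :
    3 / (exp eulerMascheroniConstant * π ^ 2 * log (log n)) ≤ (n.totient : ℝ) / n := by
  have hlog : (4 : ℝ) ≤ log n := by
    have := le_log_of_two_pow 7 (by norm_num : (0 : ℝ) < 210)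
    have := log_le_log (by norm_num) (by exact_mod_cast hn : (210 : ℝ) ≤ n)
    norm_num at *
    linarith [log_two_gt_d9]
  have hu : (1.3 : ℝ) ≤ log (log n) := by
    have := log_le_log (by norm_num) hlog
    rw [show (4 : ℝ) = 2 ^ 2 by norm_num, log_pow] at this
    norm_num at this
    linarith [log_two_gt_d9]
  have hc := prod_nth_prime_le_totient_div_self (n := n) (k := 7) (by omega) (by
    simpa [prod_range_succ, Nat.nth_prime_zero_eq_two, Nat.nth_prime_one_eq_three,
      Nat.nth_prime_two_eq_five, Nat.nth_prime_three_eq_seven, Nat.nth_prime_four_eq_eleven,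
      Nat.nth_prime_five_eq_thirteen, Nat.nth_prime_six_eq_seventeen,
      Nat.nth_prime_seven_eq_nineteen] using h)
  simp only [prod_range_succ, prod_range_zero, Nat.nth_prime_zero_eq_two,
    Nat.nth_prime_one_eq_three, Nat.nth_prime_two_eq_five, Nat.nth_prime_three_eq_seven,
    Nat.nth_prime_four_eq_eleven, Nat.nth_prime_five_eq_thirteen,
    Nat.nth_prime_six_eq_seventeen] at hc
  refine (three_div_le_of_three_le_sixteen_mul (by linarith) ?_).trans hc
  norm_num
  linarith

/-- For every integer `n ≥ 10`,
`φ(n)/n ≥ 3 / (e^γ * π² * log log n)` where `γ` is the Euler–Mascheroni constant. -/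
theorem totient_ratio_lower_bound (n : ℕ) (hn : 10 ≤ n) :
    (Nat.totient n : ℝ) / (n : ℝ) ≥
      3 / (Real.exp Real.eulerMascheroniConstant * Real.pi ^ 2 * Real.log (Real.log n)) := by
  rcases lt_or_ge n 210 with h₁ | h₁
  · exact three_div_le_totient_div_self_of_lt_210 hn h₁
  rcases lt_or_ge n 9699690 with h₂ | h₂
  · exact three_div_le_totient_div_self_of_lt_9699690 h₁ h₂
  · exact three_div_le_totient_div_self_of_large h₂
end

section
/- Let q be a prime power, let n ≥ 2 be an integer, let K be a finite field with q elements, and let F be a finite field extension of K with q^n elements. Then the number of elements α ∈ F such that the n elements α, α^q, α^{q²}, …, α^{q^{n−1}} are linearly independent over K equals the number of units of the quotient ring K[X]/(X^n − 1). -/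
/-!
Let `T` be an endomorphism of a finite-dimensional `K`-space `V` with `deg (minpoly T) = dim V = d`,
and let `A = K[X] ⧸ (minpoly T)` act on `V` through `T`. The vectors `v, T v, …, T ^ (d - 1) v`
are independent iff `r ↦ r(T) v` is injective on `A`, as it maps the power basis of `A` to them.
Since `K[X]` is a PID, some `v₀` has annihilator exactly `(minpoly T)`, so `r ↦ r(T) v₀` is an
isomorphism `A ≃ V`; under it, `r(T) v₀` is cyclic iff multiplication by `r` is injective on the
artinian ring `A`, i.e. iff `r` is a unit. For `F / K` take `T` the Frobenius `x ↦ x ^ q`, whose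
minimal polynomial is `X ^ n - 1`.
-/

open Polynomial Module

theorem Module.Basis.linearIndependent_comp_iff_injective {ι R M M' : Type*} [Ring R]
    [AddCommGroup M] [AddCommGroup M'] [Module R M] [Module R M'] (b : Basis ι R M)
    (f : M →ₗ[R] M') : LinearIndependent R (f ∘ b) ↔ Function.Injective f :=
  ⟨fun h => b.constr_self ℕ f ▸ b.injective_constr_of_linearIndependent h,
    fun h => b.linearIndependent.map' f (LinearMap.ker_eq_bot.mpr h)⟩

theorem FiniteField.frobeniusAlgHom_toLinearMap_pow_apply (K R : Type*) [Field K] [Fintype K]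
    [CommRing R] [Algebra K R] (i : ℕ) (x : R) :
    ((frobeniusAlgHom K R).toLinearMap ^ i) x = x ^ Fintype.card K ^ i := by
  rw [Module.End.coe_pow, AlgHom.coe_toLinearMap, coe_frobeniusAlgHom, pow_iterate]

namespace Module.End

variable {K V : Type*} [Field K] [AddCommGroup V] [Module K V] (T : Module.End K V)

noncomputable def adjoinRootMinpolyLift : AdjoinRoot (minpoly K T) →ₐ[K] Module.End K V :=
  Ideal.Quotient.liftₐ _ (aeval T) fun p hp => by
    obtain ⟨r, rfl⟩ := Ideal.mem_span_singleton'.mp hp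
    rw [map_mul, minpoly.aeval, mul_zero]

noncomputable def orbitMap (v : V) : AdjoinRoot (minpoly K T) →ₗ[K] V :=
  LinearMap.applyₗ v ∘ₗ (adjoinRootMinpolyLift T).toLinearMap

theorem orbitMap_mk (v : V) (p : K[X]) : orbitMap T v (AdjoinRoot.mk _ p) = aeval T p v :=
  rfl

theorem orbitMap_root_pow (v : V) (i : ℕ) :
    orbitMap T v (AdjoinRoot.root (minpoly K T) ^ i) = (T ^ i) v := by
  rw [← AdjoinRoot.mk_X, ← map_pow, orbitMap_mk, aeval_X_pow]

theorem orbitMap_orbitMap (v : V) (r s : AdjoinRoot (minpoly K T)) :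
    orbitMap T (orbitMap T v r) s = orbitMap T v (s * r) := by
  simp [orbitMap, map_mul]

variable [FiniteDimensional K V]

theorem linearIndependent_pow_apply_iff_injective_orbitMap {n : ℕ}
    (hn : (minpoly K T).natDegree = n) (v : V) :
    LinearIndependent K (fun i : Fin n => (T ^ (i : ℕ)) v) ↔
      Function.Injective (orbitMap T v) := by
  subst hn
  let B := AdjoinRoot.powerBasis (minpoly.ne_zero (Algebra.IsIntegral.isIntegral (R := K) T))
  have hB : (fun i : Fin B.dim => (T ^ (i : ℕ)) v) = orbitMap T v ∘ B.basis :=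
    funext fun i => by
      rw [Function.comp_apply, PowerBasis.coe_basis, AdjoinRoot.powerBasis_gen, orbitMap_root_pow]
  change LinearIndependent K (fun i : Fin B.dim => (T ^ (i : ℕ)) v) ↔ _
  rw [hB, B.basis.linearIndependent_comp_iff_injective]

theorem exists_injective_orbitMap : ∃ v : V, Function.Injective (orbitMap T v) := by
  obtain ⟨x, hx⟩ := Module.exists_ker_toSpanSingleton_eq_annihilator K[X] (AEval' T)
  obtain ⟨v, rfl⟩ := (AEval'.of T).surjective x
  refine ⟨v, (injective_iff_map_eq_zero _).mpr fun r hr => ?_⟩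
  obtain ⟨p, rfl⟩ := AdjoinRoot.mk_surjective r
  rw [AdjoinRoot.mk_eq_zero, ← Ideal.mem_span_singleton, span_minpoly_eq_annihilator, ← hx,
    LinearMap.mem_ker, LinearMap.toSpanSingleton_apply, ← AEval.of_aeval_smul,
    Module.End.smul_def, ← orbitMap_mk, hr, map_zero]

theorem card_linearIndependent_pow_apply_eq_card_units
    (hT : (minpoly K T).natDegree = finrank K V) :
    Nat.card {v : V // LinearIndependent K (fun i : Fin (finrank K V) => (T ^ (i : ℕ)) v)} =
      Nat.card (AdjoinRoot (minpoly K T))ˣ := by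
  set A := AdjoinRoot (minpoly K T)
  let B := AdjoinRoot.powerBasis (minpoly.ne_zero (Algebra.IsIntegral.isIntegral (R := K) T))
  have : FiniteDimensional K A := B.finite
  have : IsArtinianRing A := IsArtinianRing.of_finite K A
  obtain ⟨v₀, hv₀⟩ := exists_injective_orbitMap T
  let e : A ≃ₗ[K] V := LinearEquiv.ofBijective (orbitMap T v₀) ⟨hv₀,
    (LinearMap.injective_iff_surjective_of_finrank_eq_finrank (B.finrank.trans hT)).mp hv₀⟩
  have isUnit_iff : ∀ r : A, IsUnit r ↔ Function.Injective (orbitMap T (e r)) := fun r => by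
    rw [IsArtinianRing.isUnit_iff_isRightRegular, IsRightRegular, ← hv₀.of_comp_iff]
    exact iff_of_eq (congrArg _ (funext fun s => (orbitMap_orbitMap T v₀ r s).symm))
  calc Nat.card {v : V // LinearIndependent K (fun i : Fin (finrank K V) => (T ^ (i : ℕ)) v)}
      = Nat.card {v : V // Function.Injective (orbitMap T v)} := by
        simp_rw [linearIndependent_pow_apply_iff_injective_orbitMap T hT]
    _ = Nat.card {r : A // IsUnit r} := Nat.card_congr (e.toEquiv.subtypeEquiv isUnit_iff).symm
    _ = Nat.card Aˣ := Nat.card_congr (Equiv.ofInjective _ Units.val_injective).symm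

end Module.End

theorem card_normal_elements_eq_card_units_quotient_general
    (q n : ℕ)
    (K F : Type*) [Field K] [Fintype K] [Field F] [Fintype F] [Algebra K F]
    (hK : Fintype.card K = q) (hF : Fintype.card F = q ^ n) :
    Nat.card {α : F // LinearIndependent K (fun i : Fin n => α ^ q ^ (i : ℕ))} =
      Nat.card ((K[X] ⧸ Ideal.span ({X ^ n - 1} : Set K[X]))ˣ) := by
  subst hK
  obtain rfl : finrank K F = n := Nat.pow_right_injective Fintype.one_lt_card
    (Module.card_eq_pow_finrank.symm.trans hF)
  have hminpoly := FiniteField.minpoly_frobeniusAlgHom K F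
  have hcount := Module.End.card_linearIndependent_pow_apply_eq_card_units
    (FiniteField.frobeniusAlgHom K F).toLinearMap (by rw [hminpoly, ← C_1, natDegree_X_pow_sub_C])
  simp only [FiniteField.frobeniusAlgHom_toLinearMap_pow_apply] at hcount
  rwa [hminpoly] at hcount

/-- Let `q` be a prime power, `n ≥ 2`, `K` a finite field with `q`
elements and `F` a field extension of `K` with `q^n` elements. Then the number of
normal elements `α ∈ F` (i.e. those for which `α, α^q, …, α^{q^{n-1}}` are linearly
independent over `K`) equals the number of units of `K[X]/(X^n - 1)`. -/
theorem card_normal_elements_eq_card_units_quotient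
    (q n : ℕ) (hq : IsPrimePow q) (hn : 2 ≤ n)
    (K F : Type*) [Field K] [Fintype K] [Field F] [Fintype F] [Algebra K F]
    (hK : Fintype.card K = q) (hF : Fintype.card F = q ^ n) :
    Nat.card {α : F // LinearIndependent K (fun i : Fin n => α ^ q ^ (i : ℕ))} =
      Nat.card ((K[X] ⧸ Ideal.span ({X ^ n - 1} : Set K[X]))ˣ) :=
  card_normal_elements_eq_card_units_quotient_general q n K F hK hF
end

section
/- There exists an absolute constant c > 0 such that for every prime power q, every integer n ≥ 2, and K a finite field with q elements, the number Φ(x^n − 1) of units of the quotient ring K[X]/(X^n − 1) satisfies Φ(x^n − 1)/(q^n − 1) ≥ c / log(q^n), where log denotes the natural logarithm. -/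
/-!
Units of a commutative ring are the elements that are units modulo the nilradical, and for an
Artinian ring `R ⧸ nilradical R ≃ ∏ 𝔪, R ⧸ 𝔪`; hence `|Rˣ| = |R| ∏ 𝔪, (1 - 1 / |R ⧸ 𝔪|)`.
For `R = K[X] ⧸ (Xⁿ - 1)` with `|K| = q`, a maximal ideal of residue degree `d` yields `d`
distinct `K`-embeddings `R → K̄`, each determined by the image of the root, which is a
`(q ^ d - 1)`-th root of unity because the root is a unit. So at most `(q ^ d - 1) / d` maximal
ideals have degree `d`, and `∑ 𝔪, 1 / (|R ⧸ 𝔪| - 1) ≤ ∑ d ≤ n, 1 / d ≤ 1 + log n`. Since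
`1 - 1 / c ≥ exp (-1 / (c - 1))`, this gives `|Rˣ| ≥ qⁿ / (e n)`, and `1 / (e n)` is at least
`(log 2 / e) / log (qⁿ)`.
-/

open Polynomial Module Function Finset Real

theorem exp_neg_inv_sub_one_le_one_sub_inv {c : ℝ} (hc : 1 < c) :
    exp (-(c - 1)⁻¹) ≤ 1 - c⁻¹ := by
  have hc1 : c - 1 ≠ 0 := (sub_pos.2 hc).ne'
  calc exp (-(c - 1)⁻¹) = (exp (c - 1)⁻¹)⁻¹ := exp_neg _
    _ ≤ ((c - 1)⁻¹ + 1)⁻¹ :=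
        inv_anti₀ (by have := inv_pos.2 (sub_pos.2 hc); linarith) (add_one_le_exp _)
    _ = 1 - c⁻¹ := by
        rw [inv_eq_iff_eq_inv]
        field_simp
        ring

theorem exp_neg_sum_le_prod_one_sub_inv {ι : Type*} (s : Finset ι) {c : ι → ℝ}
    (hc : ∀ i ∈ s, 1 < c i) : exp (-∑ i ∈ s, (c i - 1)⁻¹) ≤ ∏ i ∈ s, (1 - (c i)⁻¹) := by
  rw [← sum_neg_distrib, exp_sum]
  exact prod_le_prod (fun _ _ => (exp_pos _).le) fun i hi =>
    exp_neg_inv_sub_one_le_one_sub_inv (hc i hi)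

theorem sum_inv_pow_sub_one_le_harmonic {ι : Type*} [Fintype ι] {q n : ℕ} (deg : ι → ℕ)
    (hdeg : ∀ i, deg i ∈ Icc 1 n) (hfiber : ∀ d, #{i | deg i = d} * d ≤ q ^ d - 1) :
    ∑ i, ((q : ℝ) ^ deg i - 1)⁻¹ ≤ harmonic n := by
  have hterm (d : ℕ) (hd : d ∈ Icc 1 n) :
      (#{i | deg i = d} : ℝ) * ((q : ℝ) ^ d - 1)⁻¹ ≤ (d : ℝ)⁻¹ := by
    have hd : 0 < d := (mem_Icc.1 hd).1
    rcases Nat.eq_zero_or_pos #{i | deg i = d} with h0 | hpos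
    · simp [h0]
    have hqd : 0 < q ^ d - 1 := (Nat.mul_pos hpos hd).trans_le (hfiber d)
    have hcast : ((q ^ d - 1 : ℕ) : ℝ) = (q : ℝ) ^ d - 1 := by
      push_cast [Nat.cast_sub (Nat.sub_pos_iff_lt.1 hqd).le]
      ring
    rw [← hcast, ← div_eq_mul_inv, div_le_iff₀ (by exact_mod_cast hqd), inv_mul_eq_div,
      le_div_iff₀ (by positivity)]
    exact_mod_cast hfiber d
  calc ∑ i, ((q : ℝ) ^ deg i - 1)⁻¹
      = ∑ d ∈ Icc 1 n, ∑ i with deg i = d, ((q : ℝ) ^ deg i - 1)⁻¹ :=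
        (sum_fiberwise_of_maps_to (fun i _ => hdeg i) _).symm
    _ = ∑ d ∈ Icc 1 n, (#{i | deg i = d} : ℝ) * ((q : ℝ) ^ d - 1)⁻¹ := by
        refine sum_congr rfl fun d _ => ?_
        rw [sum_congr rfl fun i hi => by rw [(mem_filter.1 hi).2], sum_const, nsmul_eq_mul]
    _ ≤ ∑ d ∈ Icc 1 n, (d : ℝ)⁻¹ := sum_le_sum hterm
    _ = harmonic n := by rw [harmonic_eq_sum_Icc]; push_cast; rfl

theorem log_two_div_exp_one_div_log_pow_le {Q Φ : ℝ} {n : ℕ} (hQ : 2 ≤ Q) (hn : 0 < n)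
    (hΦ : Q ^ n ≤ exp 1 * n * Φ) : log 2 / exp 1 / log (Q ^ n) ≤ Φ / (Q ^ n - 1) := by
  have hQn : 2 ≤ Q ^ n := hQ.trans (le_self_pow₀ (by linarith) hn.ne')
  have hΦ0 : 0 < Φ := pos_of_mul_pos_right (by linarith : 0 < exp 1 * n * Φ) (by positivity)
  calc log 2 / exp 1 / log (Q ^ n) = 1 / (exp 1 * n) * (log 2 / log Q) := by
        rw [log_pow]
        field_simp
    _ ≤ 1 / (exp 1 * n) :=
        mul_le_of_le_one_right (by positivity)
          ((div_le_one (log_pos (by linarith))).2 (log_le_log (by norm_num) hQ))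
    _ ≤ Φ / Q ^ n := by
        rw [div_le_div_iff₀ (by positivity) (by positivity)]
        linarith
    _ ≤ Φ / (Q ^ n - 1) :=
        div_le_div_of_nonneg_left hΦ0.le (by linarith) (by linarith)

theorem card_units_eq_card_nilradical_mul_card_units_quotient (R : Type*) [CommRing R] :
    Nat.card Rˣ = Nat.card (nilradical R) * Nat.card (R ⧸ nilradical R)ˣ := by
  have : IsLocalHom (Ideal.Quotient.mk (nilradical R)) :=
    isLocalHom_of_le_jacobson_bot _ (by rw [Ideal.jacobson_bot]; exact nilradical_le_jacobson R)
  let unitsR := Submonoid.unitsTypeEquivIsUnitSubmonoid (M := R)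
  let unitsQ := Submonoid.unitsTypeEquivIsUnitSubmonoid (M := R ⧸ nilradical R)
  have e : Rˣ ≃ nilradical R × (R ⧸ nilradical R)ˣ :=
    unitsR.toEquiv.trans <| (Equiv.subtypeEquivRight fun x =>
      (isUnit_map_iff (Ideal.Quotient.mk (nilradical R)) x).symm).trans <|
      (QuotientAddGroup.preimageMkEquivAddSubgroupProdSet _ _).trans <|
      Equiv.prodCongr (Equiv.refl _) unitsQ.toEquiv.symm
  rw [Nat.card_congr e, Nat.card_prod]

-- Both sides vanish at `c = 0`, since `0⁻¹ = 0` and `0 - 1 = 0` in `ℕ`.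
theorem natCast_mul_one_sub_inv (c : ℕ) : (c : ℝ) * (1 - (c : ℝ)⁻¹) = ((c - 1 : ℕ) : ℝ) := by
  rcases c.eq_zero_or_pos with rfl | hc
  · simp
  · rw [Nat.cast_sub hc, mul_sub, mul_inv_cancel₀ (by positivity)]
    simp

theorem card_units_eq_card_mul_prod_one_sub_inv (R : Type*) [CommRing R] [IsArtinianRing R]
    [Fintype (MaximalSpectrum R)] :
    (Nat.card Rˣ : ℝ) =
      Nat.card R * ∏ I : MaximalSpectrum R, (1 - (Nat.card (R ⧸ I.asIdeal) : ℝ)⁻¹) := by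
  let e := IsArtinianRing.quotNilradicalEquivPi R
  let _ (I : MaximalSpectrum R) : Field (R ⧸ I.asIdeal) := Ideal.Quotient.field _
  have hunits : Nat.card (R ⧸ nilradical R)ˣ =
      ∏ I : MaximalSpectrum R, (Nat.card (R ⧸ I.asIdeal) - 1) := by
    rw [Nat.card_congr (Units.mapEquiv e.toMulEquiv).toEquiv,
      Nat.card_congr MulEquiv.piUnits.toEquiv, Nat.card_pi]
    simp only [Nat.card_units]
  rw [card_units_eq_card_nilradical_mul_card_units_quotient, hunits,
    Submodule.card_eq_card_quotient_mul_card (nilradical R), Nat.card_congr e.toEquiv, Nat.card_pi]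
  push_cast [mul_assoc, ← prod_mul_distrib, natCast_mul_one_sub_inv]
  rfl

theorem Ideal.ker_algHom_comp_mkₐ_of_isMaximal {K A B : Type*} [CommSemiring K] [CommRing A]
    [Algebra K A] [Semiring B] [Nontrivial B] [Algebra K B] (I : Ideal A) [I.IsMaximal]
    (φ : A ⧸ I →ₐ[K] B) : RingHom.ker (φ.comp (Ideal.Quotient.mkₐ K I)) = I :=
  (‹I.IsMaximal›.eq_of_le (RingHom.ker_ne_top _) fun x hx => by
    simp [RingHom.mem_ker, Ideal.Quotient.eq_zero_iff_mem.2 hx]).symm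

theorem FiniteField.pow_natCard_pow_finrank_sub_one_eq_one {K L : Type*} [Field K] [Finite K]
    [Field L] [Algebra K L] [Module.Finite K L] {x : L} (hx : x ≠ 0) :
    x ^ (Nat.card K ^ finrank K L - 1) = 1 := by
  have : Finite L := Module.finite_of_finite K
  let _ : Fintype L := Fintype.ofFinite L
  rw [← Module.natCard_eq_pow_finrank, Nat.card_eq_fintype_card]
  exact FiniteField.pow_card_sub_one_eq_one x hx

namespace AdjoinRoot

variable {K : Type*} [Field K]

theorem natCard_eq_pow_natDegree {f : K[X]} (hf : f ≠ 0) :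
    Nat.card (AdjoinRoot f) = Nat.card K ^ f.natDegree := by
  have : Module.Finite K (AdjoinRoot f) := (powerBasis hf).finite
  rw [Module.natCard_eq_pow_finrank (K := K)]
  exact congrArg _ finrank_quotient_span_eq_natDegree

theorem isUnit_root_X_pow_sub_one {n : ℕ} (hn : n ≠ 0) : IsUnit (root (X ^ n - 1 : K[X])) := by
  have h := eval₂_root (X ^ n - 1 : K[X])
  rw [eval₂_sub, eval₂_X_pow, eval₂_one, sub_eq_zero] at h
  exact .of_pow_eq_one h hn

theorem card_maximalSpectrum_finrank_eq_mul_le [Finite K] {f : K[X]} (hf : f ≠ 0)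
    (hroot : IsUnit (root f)) (d : ℕ) :
    Nat.card {I : MaximalSpectrum (AdjoinRoot f) // finrank K (AdjoinRoot f ⧸ I.asIdeal) = d} * d
      ≤ Nat.card K ^ d - 1 := by
  let A := AdjoinRoot f
  have : Module.Finite K A := (powerBasis hf).finite
  have : Finite A := Module.finite_of_finite K
  let ι := {I : MaximalSpectrum A // finrank K (A ⧸ I.asIdeal) = d}
  let _ : Fintype ι := Fintype.ofFinite ι
  let _ (I : MaximalSpectrum A) : Field (A ⧸ I.asIdeal) := Ideal.Quotient.field _
  let Emb := Σ I : ι, A ⧸ I.1.asIdeal →ₐ[K] AlgebraicClosure K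
  let roots := nthRootsFinset (Nat.card K ^ d - 1) (1 : AlgebraicClosure K)
  have hcard_emb : Nat.card Emb = Nat.card ι * d := by
    rw [Nat.card_sigma, sum_congr rfl fun I _ => ?_, sum_const, smul_eq_mul, card_univ,
      Nat.card_eq_fintype_card]
    rw [Nat.card_eq_fintype_card, AlgHom.card, I.2]
  have hmem (p : Emb) : p.2 (Ideal.Quotient.mk _ (root f)) ∈ roots := by
    obtain ⟨⟨I, hI⟩, φ⟩ := p
    have : Finite (A ⧸ I.asIdeal) := .of_surjective _ Ideal.Quotient.mk_surjective
    have hpos : 0 < Nat.card K ^ d - 1 := by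
      rw [← hI, ← Module.natCard_eq_pow_finrank]
      exact Nat.sub_pos_of_lt Finite.one_lt_card
    have hx := FiniteField.pow_natCard_pow_finrank_sub_one_eq_one (K := K)
      (hroot.map (Ideal.Quotient.mk I.asIdeal)).ne_zero
    rw [hI] at hx
    rw [mem_nthRootsFinset hpos, ← map_pow, hx, map_one]
  have hinj : Injective fun p : Emb => (⟨_, hmem p⟩ : roots) := by
    rintro ⟨I, φ⟩ ⟨J, ψ⟩ h
    have hcomp : φ.comp (Ideal.Quotient.mkₐ K _) = ψ.comp (Ideal.Quotient.mkₐ K _) :=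
      algHom_ext (Subtype.ext_iff.1 h)
    obtain rfl : I = J := Subtype.ext <| MaximalSpectrum.ext <| by
      rw [← Ideal.ker_algHom_comp_mkₐ_of_isMaximal _ φ, hcomp,
        Ideal.ker_algHom_comp_mkₐ_of_isMaximal]
    rw [Ideal.Quotient.algHom_ext K hcomp]
  calc Nat.card ι * d = Nat.card Emb := hcard_emb.symm
    _ ≤ Nat.card roots := Nat.card_le_card_of_injective _ hinj
    _ ≤ Nat.card K ^ d - 1 := by
      classical
      rw [Nat.card_eq_fintype_card, Fintype.card_coe, show roots = _ from nthRootsFinset_def _ _]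
      exact (Multiset.toFinset_card_le _).trans (card_nthRoots _ _)

theorem sum_inv_card_quotient_sub_one_le [Finite K] {f : K[X]} (hf : f ≠ 0)
    (hroot : IsUnit (root f)) [Fintype (MaximalSpectrum (AdjoinRoot f))] :
    ∑ I : MaximalSpectrum (AdjoinRoot f), ((Nat.card (AdjoinRoot f ⧸ I.asIdeal) : ℝ) - 1)⁻¹
      ≤ harmonic f.natDegree := by
  have : Module.Finite K (AdjoinRoot f) := (powerBasis hf).finite
  let deg (I : MaximalSpectrum (AdjoinRoot f)) : ℕ := finrank K (AdjoinRoot f ⧸ I.asIdeal)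
  have hdeg (I : MaximalSpectrum (AdjoinRoot f)) : deg I ∈ Icc 1 f.natDegree := by
    let _ : Field (AdjoinRoot f ⧸ I.asIdeal) := Ideal.Quotient.field _
    refine mem_Icc.2 ⟨finrank_pos, ?_⟩
    exact (LinearMap.finrank_le_finrank_of_surjective
      (f := (Ideal.Quotient.mkₐ K I.asIdeal).toLinearMap)
      (Ideal.Quotient.mkₐ_surjective K _)).trans_eq finrank_quotient_span_eq_natDegree
  have hcard (I : MaximalSpectrum (AdjoinRoot f)) :
      Nat.card (AdjoinRoot f ⧸ I.asIdeal) = Nat.card K ^ deg I :=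
    Module.natCard_eq_pow_finrank
  simp only [hcard, Nat.cast_pow]
  refine sum_inv_pow_sub_one_le_harmonic deg hdeg fun d => ?_
  rw [← Fintype.card_subtype, ← Nat.card_eq_fintype_card]
  exact card_maximalSpectrum_finrank_eq_mul_le hf hroot d

theorem pow_natDegree_le_exp_one_mul_natDegree_mul_card_units [Finite K] {f : K[X]}
    (hf : 0 < f.natDegree) (hroot : IsUnit (root f)) :
    (Nat.card K : ℝ) ^ f.natDegree ≤ exp 1 * f.natDegree * Nat.card (AdjoinRoot f)ˣ := by
  let A := AdjoinRoot f
  have hf0 : f ≠ 0 := ne_zero_of_natDegree_gt hf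
  have : Module.Finite K A := (powerBasis hf0).finite
  have : Finite A := Module.finite_of_finite K
  let _ : Fintype (MaximalSpectrum A) := Fintype.ofFinite _
  have hgt (I : MaximalSpectrum A) : 1 < (Nat.card (A ⧸ I.asIdeal) : ℝ) := by
    let _ : Field (A ⧸ I.asIdeal) := Ideal.Quotient.field _
    have : Finite (A ⧸ I.asIdeal) := .of_surjective _ Ideal.Quotient.mk_surjective
    exact_mod_cast Finite.one_lt_card
  have hsum := (sum_inv_card_quotient_sub_one_le hf0 hroot).trans (harmonic_le_one_add_log _)
  calc (Nat.card K : ℝ) ^ f.natDegree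
      = Nat.card A := by rw [natCard_eq_pow_natDegree hf0, Nat.cast_pow]
    _ = exp 1 * f.natDegree * (Nat.card A * exp (-(1 + log f.natDegree))) := by
        rw [exp_neg, exp_add, exp_log (by exact_mod_cast hf)]
        field_simp
    _ ≤ exp 1 * f.natDegree *
          (Nat.card A * ∏ I : MaximalSpectrum A, (1 - (Nat.card (A ⧸ I.asIdeal) : ℝ)⁻¹)) := by
        gcongr exp 1 * _ * (_ * ?_)
        exact (exp_le_exp.2 (neg_le_neg hsum)).trans
          (exp_neg_sum_le_prod_one_sub_inv _ fun I _ => hgt I)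
    _ = exp 1 * f.natDegree * Nat.card Aˣ := by
        rw [card_units_eq_card_mul_prod_one_sub_inv]

end AdjoinRoot

/-- There is an absolute constant `c > 0` such that for every prime
power `q`, every integer `n ≥ 2` and every finite field `K` with `q` elements, the
number `Φ(xⁿ - 1)` of units of `K[X]/(Xⁿ - 1)` satisfies
`Φ(xⁿ - 1)/(qⁿ - 1) ≥ c / log (qⁿ)`. -/
theorem card_units_quotient_lower_bound :
    ∃ c : ℝ, 0 < c ∧
      ∀ (q n : ℕ), IsPrimePow q → 2 ≤ n →
        ∀ (K : Type) [Field K] [Fintype K], Fintype.card K = q →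
          (Nat.card ((K[X] ⧸ Ideal.span ({X ^ n - 1} : Set K[X]))ˣ) : ℝ) /
              ((q : ℝ) ^ n - 1) ≥ c / Real.log ((q : ℝ) ^ n) := by
  refine ⟨log 2 / exp 1, by positivity, fun q n _ hn K _ _ hK => ?_⟩
  subst hK
  have hdeg : (X ^ n - 1 : K[X]).natDegree = n := by
    simpa using natDegree_X_pow_sub_C (n := n) (r := (1 : K))
  have hbound := AdjoinRoot.pow_natDegree_le_exp_one_mul_natDegree_mul_card_units
    (by omega : 0 < (X ^ n - 1 : K[X]).natDegree)
    (AdjoinRoot.isUnit_root_X_pow_sub_one (by omega))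
  rw [hdeg, Nat.card_eq_fintype_card] at hbound
  exact log_two_div_exp_one_div_log_pow_le (by exact_mod_cast Fintype.one_lt_card) (by omega)
    hbound
end

section
/- Let F be a finite field and set N = |F| − 1. For every nonzero element α ∈ F, the sum (φ(N)/N) · Σ_{d ∣ N} (μ(d)/φ(d)) · Σ_{χ : ord(χ) = d} χ(α), where the inner sum runs over all multiplicative characters χ of F with values in ℂ whose order is exactly d, equals 1 if α has multiplicative order N (i.e., α generates the cyclic group Fˣ), and equals 0 otherwise. -/
/-!
Let `n` be the order of `α` in the cyclic group `Fˣ`. For `d ∣ N`, `α` is a `d`-th power exactly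
when `d ∣ N / n`, and by orthogonality `∑_{χ^d = 1} χ(α)` is `d` in that case and `0` otherwise.
Hence `∑_{d ∣ N} (μ(d)/d) ∑_{χ^d = 1} χ(α) = ∑_{d ∣ N/n} μ(d) = [n = N]`.
Grouping the characters by their order `e`, the coefficient of `χ(α)` on the left is
`∑_{e ∣ d ∣ N} μ(d)/d = (φ(N)/N) · μ(e)/φ(e)`, an identity of Euler products over the primes
dividing `N`.
-/

open Finset ArithmeticFunction
open scoped ArithmeticFunction.Moebius Nat

theorem Finset.sum_powerset_filter_superset_prod {ι R : Type*} [CommSemiring R] [DecidableEq ι]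
    {s t : Finset ι} (hst : s ⊆ t) (f : ι → R) :
    ∑ u ∈ t.powerset with s ⊆ u, ∏ i ∈ u, f i = (∏ i ∈ s, f i) * ∏ i ∈ t \ s, (1 + f i) := by
  rw [prod_one_add, mul_sum]
  refine (sum_nbij' (s ∪ ·) (· \ s) ?_ ?_ ?_ ?_ ?_).symm
  · intro u hu
    simp only [mem_powerset, mem_filter, subset_sdiff] at hu ⊢
    exact ⟨union_subset hst hu.1, subset_union_left⟩
  · intro u hu
    simp only [mem_powerset, mem_filter] at hu ⊢
    exact sdiff_subset_sdiff hu.1 le_rfl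
  · intro u hu
    simp only [mem_powerset, subset_sdiff] at hu
    exact union_sdiff_cancel_left hu.2.symm
  · intro u hu
    simp only [mem_filter] at hu
    exact union_sdiff_of_subset hu.2
  · intro u hu
    simp only [mem_powerset, subset_sdiff] at hu
    rw [prod_union hu.2.symm]

theorem Nat.sum_divisors_eq_sum_powerset_primeFactors {M : Type*} [AddCommMonoid M] {n : ℕ}
    (hn : n ≠ 0) {f : ℕ → M} (hf : ∀ d, ¬Squarefree d → f d = 0) :
    ∑ d ∈ n.divisors, f d = ∑ s ∈ n.primeFactors.powerset, f (∏ p ∈ s, p) := by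
  rw [← sum_filter_of_ne (p := Squarefree) fun d _ h => not_not.mp (mt (hf d) h),
    Nat.sum_divisors_filter_squarefree hn, Nat.factors_eq]
  simp only [Finset.prod_val]
  rfl

theorem Nat.cast_totient_eq_mul_prod {K : Type*} [Field K] [CharZero K] (n : ℕ) :
    (φ n : K) = n * ∏ p ∈ n.primeFactors, (1 - (p : K)⁻¹) := by
  have h := congrArg (Rat.cast : ℚ → K) (Nat.totient_eq_mul_prod_factors n)
  push_cast at h
  exact h

theorem Nat.dvd_prod_primes_iff_primeFactors_subset {e : ℕ} (he : Squarefree e) {s : Finset ℕ}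
    (hs : ∀ p ∈ s, p.Prime) : e ∣ ∏ p ∈ s, p ↔ e.primeFactors ⊆ s :=
  ⟨fun h => Nat.primeFactors_prod hs ▸
      Nat.primeFactors_mono h (prod_ne_zero_iff.mpr fun p hp => (hs p hp).ne_zero),
    fun h => Nat.prod_primeFactors_of_squarefree he ▸ prod_dvd_prod_of_subset _ _ _ h⟩

theorem moebius_div_prod_primes {K : Type*} [Field K] {s : Finset ℕ} (hs : ∀ p ∈ s, p.Prime) :
    (μ (∏ p ∈ s, p) : K) / ↑(∏ p ∈ s, p) = ∏ p ∈ s, -(p : K)⁻¹ := by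
  rw [isMultiplicative_moebius.map_prod_of_prime s hs]
  push_cast
  rw [← prod_div_distrib]
  refine prod_congr rfl fun p hp => ?_
  rw [moebius_apply_prime (hs p hp)]
  simp [div_eq_mul_inv]

theorem moebius_div_totient_of_squarefree {K : Type*} [Field K] [CharZero K] {e : ℕ}
    (he : Squarefree e) :
    (μ e : K) / φ e = ∏ p ∈ e.primeFactors, -(p : K)⁻¹ / (1 - (p : K)⁻¹) := by
  have h := moebius_div_prod_primes (K := K) (s := e.primeFactors) fun _ =>
    Nat.prime_of_mem_primeFactors
  rw [Nat.prod_primeFactors_of_squarefree he] at h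
  rw [Nat.cast_totient_eq_mul_prod, ← div_div, h, prod_div_distrib]

theorem sum_divisors_filter_dvd_moebius_div {K : Type*} [Field K] [CharZero K] {N e : ℕ}
    (hN : N ≠ 0) (he : e ∣ N) :
    ∑ d ∈ N.divisors with e ∣ d, (μ d : K) / d = φ N / N * (μ e / φ e) := by
  by_cases hsq : Squarefree e
  swap
  · refine (sum_eq_zero fun d hd => ?_).trans (by simp [moebius_eq_zero_of_not_squarefree hsq])
    have hd : ¬Squarefree d := fun h => hsq (h.squarefree_of_dvd (mem_filter.mp hd).2)
    simp [moebius_eq_zero_of_not_squarefree hd]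
  have hE : e.primeFactors ⊆ N.primeFactors := Nat.primeFactors_mono he hN
  have hterm : ∀ s ∈ N.primeFactors.powerset,
      (if e ∣ ∏ p ∈ s, p then (μ (∏ p ∈ s, p) : K) / ↑(∏ p ∈ s, p) else 0)
        = if e.primeFactors ⊆ s then ∏ p ∈ s, -(p : K)⁻¹ else 0 := fun s hs => by
    have hs : ∀ p ∈ s, p.Prime := fun p hp => Nat.prime_of_mem_primeFactors (mem_powerset.mp hs hp)
    rw [if_congr (Nat.dvd_prod_primes_iff_primeFactors_subset hsq hs) (moebius_div_prod_primes hs)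
      rfl]
  have hφN : (φ N : K) / N = ∏ p ∈ N.primeFactors, (1 - (p : K)⁻¹) := by
    rw [Nat.cast_totient_eq_mul_prod, mul_div_cancel_left₀ _ (Nat.cast_ne_zero.mpr hN)]
  have hunit {p : ℕ} (hp : p ∈ e.primeFactors) : 1 - (p : K)⁻¹ ≠ 0 := by
    rw [sub_ne_zero, ne_comm, Ne, inv_eq_one, Nat.cast_eq_one]
    exact (Nat.prime_of_mem_primeFactors hp).one_lt.ne'
  rw [sum_filter, Nat.sum_divisors_eq_sum_powerset_primeFactors hN fun d hd => by
      simp [moebius_eq_zero_of_not_squarefree hd], sum_congr rfl hterm, ← sum_filter,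
    sum_powerset_filter_superset_prod hE, hφN, moebius_div_totient_of_squarefree hsq,
    ← prod_sdiff hE, mul_assoc, ← prod_mul_distrib,
    prod_congr rfl fun p hp => mul_div_cancel₀ _ (hunit hp), mul_comm]
  simp only [sub_eq_add_neg]

theorem sum_divisors_moebius {R : Type*} [Ring R] (n : ℕ) :
    ∑ d ∈ n.divisors, (μ d : R) = if n = 1 then 1 else 0 := by
  rw [← one_apply, ← coe_moebius_mul_coe_zeta, coe_mul_zeta_apply]
  simp only [intCoe_apply]

theorem sum_divisors_filter_dvd_div_moebius {R : Type*} [Ring R] {N n : ℕ} (hN : N ≠ 0)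
    (hn : n ∣ N) : ∑ d ∈ N.divisors with d ∣ N / n, (μ d : R) = if n = N then 1 else 0 := by
  rw [Nat.divisors_filter_dvd_of_dvd hN (Nat.div_dvd_of_dvd hn), sum_divisors_moebius]
  refine if_congr ?_ rfl rfl
  rw [Nat.div_eq_iff_eq_mul_left (Nat.pos_of_dvd_of_pos hn (Nat.pos_of_ne_zero hN)) hn, one_mul,
    eq_comm]

theorem pow_div_eq_one_iff_dvd_div {G : Type*} [Monoid G] {x : G} {N d : ℕ}
    (hx : orderOf x ∣ N) (hd : d ∣ N) : x ^ (N / d) = 1 ↔ d ∣ N / orderOf x := by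
  rw [← orderOf_dvd_iff_pow_eq_one, Nat.dvd_div_iff_mul_dvd hd, Nat.dvd_div_iff_mul_dvd hx,
    mul_comm]

theorem IsCyclic.mem_powMonoidHom_range_iff {G : Type*} [CommGroup G] [IsCyclic G] [Finite G]
    {d : ℕ} (hd : d ∣ Nat.card G) (g : G) :
    g ∈ (powMonoidHom d : G →* G).range ↔ g ^ (Nat.card G / d) = 1 := by
  have hle : (powMonoidHom d : G →* G).range ≤ (powMonoidHom (Nat.card G / d)).ker := by
    rintro _ ⟨h, rfl⟩
    simp [← pow_mul, Nat.mul_div_cancel' hd, pow_card_eq_one']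
  have hcard : Nat.card (powMonoidHom (Nat.card G / d) : G →* G).ker
      ≤ Nat.card (powMonoidHom d : G →* G).range := by
    rw [card_powMonoidHom_range, card_powMonoidHom_ker, Nat.gcd_eq_right hd,
      Nat.gcd_eq_right (Nat.div_dvd_of_dvd hd)]
  rw [Subgroup.eq_of_le_of_card_ge hle hcard]
  rfl

theorem MulChar.sum_filter_pow_eq_one_apply {M R : Type*} [CommMonoid M] [Finite M]
    [IsCyclic Mˣ] [CommRing R] [IsDomain R] [HasEnoughRootsOfUnity R (Monoid.exponent Mˣ)]
    [Fintype (MulChar M R)] [DecidableEq (MulChar M R)] [DecidableEq M] {d : ℕ}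
    (hd : d ∣ Nat.card Mˣ) (a : Mˣ) :
    ∑ χ : MulChar M R with χ ^ d = 1, χ a = if a ^ (Nat.card Mˣ / d) = 1 then (d : R) else 0 := by
  -- `X` is the annihilator of the subgroup `H` of `d`-th powers, and by duality `H` is that of `X`.
  set H := (powMonoidHom d : Mˣ →* Mˣ).range
  set X := (subgroupOrderIsoSubgroupMulChar M R H).ofDual
  have hX (χ : MulChar M R) : χ ∈ X ↔ χ ^ d = 1 := by
    simp only [X, H, mem_subgroupOrderIsoSubgroupMulChar_iff, MonoidHom.mem_range,
      powMonoidHom_apply, forall_exists_index, forall_apply_eq_imp_iff, MulChar.ext_iff,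
      MulChar.pow_apply_coe, MulChar.one_apply_coe, Units.val_pow_eq_pow_val, map_pow]
  have hH (b : Mˣ) : b ∈ H ↔ ∀ χ ∈ X, χ b = 1 := by
    rw [← mem_subgroupOrderIsoSubgroupMulChar_symm_iff]
    simp [X]
  by_cases ha : a ∈ H
  · rw [if_pos ((IsCyclic.mem_powMonoidHom_range_iff hd a).mp ha),
      sum_congr rfl fun χ hχ => (hH a).mp ha χ ((hX χ).mpr (mem_filter.mp hχ).2), sum_const,
      nsmul_one]
    congr 1
    calc #{χ : MulChar M R | χ ^ d = 1} = Nat.card {χ : MulChar M R // χ ^ d = 1} := by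
          rw [Nat.card_eq_fintype_card, Fintype.card_subtype]
      _ = Nat.card X := Nat.card_congr (Equiv.subtypeEquivRight hX).symm
      _ = H.index := card_subgroupOrderIsoSubgroupMulChar
      _ = d := by rw [IsCyclic.index_powMonoidHom_range, Nat.gcd_eq_right hd]
  · rw [if_neg (mt (IsCyclic.mem_powMonoidHom_range_iff hd a).mpr ha)]
    obtain ⟨χ₀, hχ₀, hχ₀a⟩ : ∃ χ ∈ X, χ a ≠ 1 := by simpa using mt (hH a).mpr ha
    have hshift : χ₀ a * ∑ χ : MulChar M R with χ ^ d = 1, χ a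
        = ∑ χ : MulChar M R with χ ^ d = 1, χ a := by
      rw [mul_sum]
      refine sum_equiv (Equiv.mulLeft χ₀) (fun χ => ?_) fun χ _ => (MulChar.mul_apply ..).symm
      simp [mul_pow, (hX χ₀).mp hχ₀]
    refine (mul_eq_zero.mp ?_).resolve_left (sub_ne_zero.mpr hχ₀a)
    rw [sub_mul, one_mul, hshift, sub_self]

theorem sum_divisors_mul_finsum_orderOf_eq {G R : Type*} [Monoid G] [Fintype G] [Semiring R]
    {n : ℕ} (hn : n ≠ 0) (hG : ∀ x : G, orderOf x ∣ n) (f : ℕ → R) (g : G → R) :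
    ∑ d ∈ n.divisors, f d * ∑ᶠ (x : G) (_ : orderOf x = d), g x = ∑ x, f (orderOf x) * g x := by
  classical
  rw [← sum_fiberwise_of_maps_to fun x _ => Nat.mem_divisors.mpr ⟨hG x, hn⟩]
  refine sum_congr rfl fun d _ => ?_
  rw [finsum_cond_eq_sum_of_cond_iff g (t := {x | orderOf x = d}) (by simp), mul_sum]
  exact sum_congr rfl fun x hx => by rw [(mem_filter.mp hx).2]

/-- Let `F` be a finite field and `N = |F| - 1`. For every nonzero
`α ∈ F`, the sum `(φ(N)/N) * ∑_{d ∣ N} (μ(d)/φ(d)) * ∑_{ord(χ) = d} χ(α)` over the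
multiplicative characters `χ` of `F` of exact order `d` equals `1` if `α` has
multiplicative order `N` (i.e. generates `Fˣ`) and `0` otherwise. -/
theorem characteristic_function_of_primitive_elements
    (F : Type*) [Field F] [Fintype F] (N : ℕ) (hN : N = Fintype.card F - 1)
    (α : F) (hα : α ≠ 0) :
    ((Nat.totient N : ℂ) / (N : ℂ)) *
        ∑ d ∈ N.divisors, ((ArithmeticFunction.moebius d : ℂ) / (Nat.totient d : ℂ)) *
          ∑ᶠ (χ : MulChar F ℂ) (_ : orderOf χ = d), χ α =
      if orderOf α = N then 1 else 0 := by
  classical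
  let _ : Fintype (MulChar F ℂ) := Fintype.ofFinite _
  set u := Units.mk0 α hα
  have hcard : Nat.card Fˣ = N := by rw [Nat.card_eq_fintype_card, Fintype.card_units, hN]
  have hN0 : N ≠ 0 := hcard ▸ Nat.card_pos.ne'
  have hχN (χ : MulChar F ℂ) : orderOf χ ∣ N := by
    rw [← hcard, ← MulChar.card_eq_card_units_of_hasEnoughRootsOfUnity F ℂ]
    exact orderOf_dvd_natCard χ
  have huN : orderOf u ∣ N := hcard ▸ orderOf_dvd_natCard u
  calc _ = ∑ χ : MulChar F ℂ, φ N / N * (μ (orderOf χ) / φ (orderOf χ)) * χ u := by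
        rw [sum_divisors_mul_finsum_orderOf_eq hN0 hχN, mul_sum]
        exact sum_congr rfl fun χ _ => (mul_assoc ..).symm
    _ = ∑ χ : MulChar F ℂ, ∑ d ∈ N.divisors with orderOf χ ∣ d, μ d / d * χ u := by
        simp_rw [← sum_divisors_filter_dvd_moebius_div hN0 (hχN _), sum_mul]
    _ = ∑ d ∈ N.divisors, μ d / d * ∑ χ : MulChar F ℂ with χ ^ d = 1, χ u := by
        simp_rw [sum_filter, orderOf_dvd_iff_pow_eq_one, mul_sum, mul_ite, mul_zero]
        exact sum_comm
    _ = ∑ d ∈ N.divisors with d ∣ N / orderOf u, (μ d : ℂ) := by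
        rw [sum_filter]
        refine sum_congr rfl fun d hd => ?_
        have hdN := Nat.dvd_of_mem_divisors hd
        rw [MulChar.sum_filter_pow_eq_one_apply (hcard ▸ hdN) u, hcard,
          if_congr (pow_div_eq_one_iff_dvd_div huN hdN) rfl rfl, mul_ite, mul_zero,
          div_mul_cancel₀ _ (Nat.cast_ne_zero.mpr (Nat.pos_of_mem_divisors hd).ne')]
    _ = if orderOf α = N then 1 else 0 := by
        rw [sum_divisors_filter_dvd_div_moebius hN0 huN, ← orderOf_units]
        rfl
end

section
/- For every ε > 0 there exists p₀ such that for every prime p ≥ p₀ and every integer s with p ∤ s, the exponential sum over the set of primitive roots modulo p satisfies |Σ_{1 ≤ g ≤ p−1, g a primitive root mod p} e^{2πi s g / p}| ≤ p^{1/2 + ε}. In particular, for each ε > 0 and all sufficiently large primes p, (1/p)·|Σ_{g primitive root mod p} e^{2πi s g / p}| ≤ p^{ε − 1/2} for every s with p ∤ s, so the Weyl sums of the set of primitive roots tend to 0 and the primitive roots are equidistributed in [1, p − 1]. -/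
/-!
Möbius inversion over the order writes the sum of `ψ` over the elements of order `n = p - 1` as
`∑_{d ∣ n} μ(n / d) T(d)`, where `T(d)` is the sum of `ψ` over the `d`-torsion `{a | a ^ d = 1}`.
Orthogonality of multiplicative characters gives `|𝔽ₚˣ| T(d) = ∑_χ G(χ ^ d, ψ)`, and every Gauss
sum has absolute value at most `√p`, so `‖T(d)‖ ≤ √p` and the whole sum is at most `τ(p - 1) √p`.
The divisor bound `τ(n) ≤ n ^ ε` for large `n` finishes the proof.
-/

open Filter Finset

theorem add_one_le_mul_pow {t : ℝ} (ht : 1 < t) (a : ℕ) :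
    (a + 1 : ℝ) ≤ (1 + (t - 1)⁻¹) * t ^ a := by
  have hbern : 1 + a * (t - 1) ≤ t ^ a := by
    simpa using one_add_mul_le_pow (a := t - 1) (by linarith) a
  have ht' : 0 < t - 1 := by linarith
  calc (a + 1 : ℝ) ≤ (1 + (t - 1)⁻¹) * (1 + a * (t - 1)) := by
        have := inv_mul_cancel₀ ht'.ne'
        nlinarith [inv_pos.2 ht', mul_nonneg (Nat.cast_nonneg a) ht'.le]
    _ ≤ (1 + (t - 1)⁻¹) * t ^ a := by gcongr

theorem add_one_le_pow_of_two_le {t : ℝ} (ht : 2 ≤ t) (a : ℕ) : (a + 1 : ℝ) ≤ t ^ a :=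
  calc (a + 1 : ℝ) ≤ 2 ^ a := by exact_mod_cast Nat.lt_two_pow_self
    _ ≤ t ^ a := by gcongr

theorem Nat.exists_card_divisors_le_mul_rpow {δ : ℝ} (hδ : 0 < δ) :
    ∃ A : ℝ, ∀ n : ℕ, n ≠ 0 → (#n.divisors : ℝ) ≤ A * (n : ℝ) ^ δ := by
  set C : ℝ := 1 + ((2 : ℝ) ^ δ - 1)⁻¹
  have hC : 1 ≤ C := le_add_of_nonneg_right <| inv_nonneg.2 <| sub_nonneg.2 <|
    Real.one_le_rpow (by norm_num) hδ.le
  -- primes `q ≥ Q` satisfy `q ^ δ ≥ 2`, so only the finitely many smaller ones cost a factor `C`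
  set Q : ℕ := ⌈(2 : ℝ) ^ δ⁻¹⌉₊
  refine ⟨C ^ Q, fun n hn ↦ ?_⟩
  have hfactor : ∀ q ∈ n.primeFactors, ((n.factorization q + 1 : ℕ) : ℝ) ≤
      (if q < Q then C else 1) * ((q ^ n.factorization q : ℕ) : ℝ) ^ δ := by
    intro q hq
    have hq2 : (2 : ℝ) ≤ q := by exact_mod_cast (Nat.prime_of_mem_primeFactors hq).two_le
    rw [Nat.cast_pow, ← Real.rpow_pow_comm (by positivity)]
    push_cast
    split_ifs with hQ
    · calc _ ≤ C * ((2 : ℝ) ^ δ) ^ n.factorization q :=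
            add_one_le_mul_pow (Real.one_lt_rpow (by norm_num) hδ) _
        _ ≤ C * ((q : ℝ) ^ δ) ^ n.factorization q := by gcongr
    · have hq : (2 : ℝ) ≤ (q : ℝ) ^ δ := by
        calc (2 : ℝ) = ((2 : ℝ) ^ δ⁻¹) ^ δ := by
              rw [← Real.rpow_mul (by norm_num), inv_mul_cancel₀ hδ.ne', Real.rpow_one]
          _ ≤ (q : ℝ) ^ δ := by
              gcongr
              exact (Nat.le_ceil _).trans (by exact_mod_cast not_lt.1 hQ)
      simpa using add_one_le_pow_of_two_le hq (n.factorization q)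
  have hsmall : ∏ q ∈ n.primeFactors, (if q < Q then C else 1) ≤ C ^ Q := by
    rw [prod_ite, prod_const, prod_const_one, mul_one]
    refine pow_le_pow_right₀ hC ((card_le_card fun q hq ↦ ?_).trans (card_range Q).le)
    exact mem_range.2 (mem_filter.1 hq).2
  calc (#n.divisors : ℝ) = ∏ q ∈ n.primeFactors, ((n.factorization q + 1 : ℕ) : ℝ) := by
        rw [Nat.card_divisors hn, Nat.cast_prod]
    _ ≤ ∏ q ∈ n.primeFactors, (if q < Q then C else 1) * ((q ^ n.factorization q : ℕ) : ℝ) ^ δ :=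
        prod_le_prod (fun _ _ ↦ by positivity) hfactor
    _ = (∏ q ∈ n.primeFactors, (if q < Q then C else 1)) * (n : ℝ) ^ δ := by
        rw [prod_mul_distrib, Real.finsetProd_rpow _ _ (fun _ _ ↦ by positivity), ← Nat.cast_prod,
          ← Nat.prod_primeFactors_pow_factorization hn]
    _ ≤ C ^ Q * (n : ℝ) ^ δ := by gcongr

theorem Nat.eventually_card_divisors_le_rpow {ε : ℝ} (hε : 0 < ε) :
    ∀ᶠ n : ℕ in atTop, (#n.divisors : ℝ) ≤ (n : ℝ) ^ ε := by
  obtain ⟨A, hA⟩ := Nat.exists_card_divisors_le_mul_rpow (half_pos hε)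
  have hlarge : ∀ᶠ n : ℕ in atTop, A ≤ (n : ℝ) ^ (ε / 2) :=
    ((tendsto_rpow_atTop (half_pos hε)).comp tendsto_natCast_atTop_atTop).eventually_ge_atTop A
  filter_upwards [hlarge, eventually_ne_atTop 0] with n hAn hn
  calc (#n.divisors : ℝ) ≤ A * (n : ℝ) ^ (ε / 2) := hA n hn
    _ ≤ (n : ℝ) ^ (ε / 2) * (n : ℝ) ^ (ε / 2) := by gcongr
    _ = (n : ℝ) ^ ε := by rw [← Real.rpow_add (by positivity), add_halves]

open ArithmeticFunction ArithmeticFunction.Moebius in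
theorem sum_orderOf_eq_sum_moebius {M R : Type*} [Monoid M] [Fintype M] [DecidableEq M] [CommRing R]
    (f : M → R) {n : ℕ} (hn : 0 < n) :
    ∑ a : M with orderOf a = n, f a =
      ∑ x ∈ n.divisorsAntidiagonal, (μ x.1 : R) * ∑ a : M with a ^ x.2 = 1, f a := by
  refine ((sum_eq_iff_sum_mul_moebius_eq (f := fun e ↦ ∑ a : M with orderOf a = e, f a)
    (g := fun d ↦ ∑ a : M with a ^ d = 1, f a)).1 (fun d hd ↦ ?_) n hn).symm
  simp only [← orderOf_dvd_iff_pow_eq_one]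
  rw [← sum_fiberwise_of_maps_to (s := univ.filter fun a : M ↦ orderOf a ∣ d) (g := orderOf)
    (t := d.divisors) fun a ha ↦ by simpa [hd.ne'] using ha]
  refine sum_congr rfl fun e he ↦ sum_congr ?_ fun _ _ ↦ rfl
  rw [filter_filter]
  exact filter_congr fun a _ ↦ ⟨fun h ↦ ⟨h ▸ Nat.dvd_of_mem_divisors he, h⟩, And.right⟩

theorem MulChar.sum_characters_eq {M R : Type*} [CommMonoid M] [Finite M] [DecidableEq M]
    [CommRing R] [IsDomain R] [HasEnoughRootsOfUnity R (Monoid.exponent Mˣ)]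
    [Fintype (MulChar M R)] (a : M) :
    ∑ χ : MulChar M R, χ a = if a = 1 then (Nat.card Mˣ : R) else 0 := by
  split_ifs with ha
  · simp [ha, ← card_eq_card_units_of_hasEnoughRootsOfUnity M R]
  · obtain ⟨χ₀, hχ₀⟩ := exists_apply_ne_one_of_hasEnoughRootsOfUnity M R ha
    refine eq_zero_of_mul_eq_self_left hχ₀ ?_
    simp only [mul_sum, ← MulChar.mul_apply]
    exact Fintype.sum_bijective _ (Group.mulLeft_bijective χ₀) _ _ fun _ ↦ rfl

section GaussSum

variable {F : Type*} [Field F] [Fintype F] {ψ : AddChar F ℂ}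

theorem norm_gaussSum_eq_sqrt {χ : MulChar F ℂ} (hχ : χ ≠ 1) (hψ : ψ ≠ 1) :
    ‖gaussSum χ ψ‖ = √(Fintype.card F) := by
  have h := gaussSum_mul_gaussSum_eq_card hχ (AddChar.IsPrimitive.of_ne_one hψ)
  rw [← star_gaussSum_eq, RCLike.star_def, Complex.mul_conj, Complex.normSq_eq_norm_sq] at h
  rw [← Real.sqrt_sq (norm_nonneg _)]
  exact congrArg Real.sqrt (by exact_mod_cast h)

theorem norm_gaussSum_le_sqrt (χ : MulChar F ℂ) (hψ : ψ ≠ 1) :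
    ‖gaussSum χ ψ‖ ≤ √(Fintype.card F) := by
  rcases eq_or_ne χ 1 with rfl | hχ
  · rw [gaussSum_one_left hψ, norm_neg, norm_one, Real.one_le_sqrt]
    exact_mod_cast Fintype.card_pos
  · exact (norm_gaussSum_eq_sqrt hχ hψ).le

theorem norm_sum_pow_eq_one_addChar_le_sqrt [DecidableEq F] [Fintype (MulChar F ℂ)]
    (hψ : ψ ≠ 1) {d : ℕ} (hd : d ≠ 0) :
    ‖∑ a : F with a ^ d = 1, ψ a‖ ≤ √(Fintype.card F) := by
  have hcard : Fintype.card (MulChar F ℂ) = Nat.card Fˣ := by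
    rw [← Nat.card_eq_fintype_card, MulChar.card_eq_card_units_of_hasEnoughRootsOfUnity]
  have hpos : (0 : ℝ) < Nat.card Fˣ := by exact_mod_cast Nat.card_pos
  -- orthogonality of characters, evaluated at `a ^ d`, detects the `d`-torsion
  have key : (Nat.card Fˣ : ℂ) * ∑ a : F with a ^ d = 1, ψ a =
      ∑ χ : MulChar F ℂ, gaussSum (χ ^ d) ψ := by
    simp only [gaussSum, MulChar.pow_apply' _ hd, ← map_pow]
    rw [sum_comm, sum_filter, mul_sum]
    refine sum_congr rfl fun a _ ↦ ?_
    rw [← sum_mul, MulChar.sum_characters_eq]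
    split_ifs <;> simp
  have hbound : ‖∑ χ : MulChar F ℂ, gaussSum (χ ^ d) ψ‖ ≤ Nat.card Fˣ * √(Fintype.card F) :=
    calc _ ≤ ∑ χ : MulChar F ℂ, √(Fintype.card F) :=
          norm_sum_le_of_le _ fun χ _ ↦ norm_gaussSum_le_sqrt _ hψ
      _ = _ := by rw [sum_const, card_univ, hcard, nsmul_eq_mul]
  rw [← key, norm_mul, Complex.norm_natCast] at hbound
  exact le_of_mul_le_mul_left hbound hpos

open ArithmeticFunction in
theorem norm_sum_orderOf_eq_addChar_le [DecidableEq F] [Fintype (MulChar F ℂ)] (hψ : ψ ≠ 1)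
    {n : ℕ} (hn : 0 < n) :
    ‖∑ a : F with orderOf a = n, ψ a‖ ≤ #n.divisors * √(Fintype.card F) := by
  rw [sum_orderOf_eq_sum_moebius _ hn, ← card_map, Nat.map_div_right_divisors, ← nsmul_eq_mul,
    ← sum_const]
  refine norm_sum_le_of_le _ fun x hx ↦ ?_
  rw [norm_mul, ← one_mul √_]
  gcongr
  · exact_mod_cast abs_moebius_le_one
  · exact norm_sum_pow_eq_one_addChar_le_sqrt hψ
      (Nat.right_ne_zero_of_mem_divisorsAntidiagonal hx)

end GaussSum

theorem ZMod.sum_filter_Icc_natCast {n : ℕ} [NeZero n] {M : Type*} [AddCommMonoid M]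
    (P : ZMod n → Prop) [DecidablePred P] (hP : ¬ P 0) (f : ZMod n → M) :
    ∑ g ∈ (Icc 1 (n - 1)).filter (fun g : ℕ ↦ P g), f g = ∑ x : ZMod n with P x, f x := by
  refine sum_nbij' (fun g ↦ g) ZMod.val (fun g hg ↦ ?_) (fun x hx ↦ ?_) (fun g hg ↦ ?_)
    (fun x _ ↦ ZMod.natCast_zmod_val x) (fun _ _ ↦ rfl)
  · simpa using (mem_filter.1 hg).2
  · have hx0 : x ≠ 0 := fun h ↦ hP (h ▸ (mem_filter.1 hx).2)
    have := ZMod.val_lt x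
    have := (ZMod.val_ne_zero x).2 hx0
    simp only [mem_filter, mem_Icc, ZMod.natCast_zmod_val]
    exact ⟨⟨by omega, by omega⟩, (mem_filter.1 hx).2⟩
  · have := mem_Icc.1 (mem_filter.1 hg).1
    exact ZMod.val_cast_of_lt (by omega)

theorem ZMod.stdAddChar_mulShift_intCast_natCast (N : ℕ) [NeZero N] (s : ℤ) (g : ℕ) :
    ZMod.stdAddChar.mulShift (s : ZMod N) g =
      Complex.exp (2 * Real.pi * Complex.I * (s : ℂ) * (g : ℂ) / (N : ℂ)) := by
  rw [AddChar.mulShift_apply, ← Int.cast_natCast, ← Int.cast_mul, ZMod.stdAddChar_coe]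
  push_cast
  ring_nf

theorem ZMod.sum_exp_primitiveRoots_eq (p : ℕ) [Fact p.Prime] (s : ℤ) :
    ∑ g ∈ (Icc 1 (p - 1)).filter (fun g : ℕ ↦ orderOf (g : ZMod p) = p - 1),
        Complex.exp (2 * Real.pi * Complex.I * (s : ℂ) * (g : ℂ) / (p : ℂ)) =
      ∑ x : ZMod p with orderOf x = p - 1, ZMod.stdAddChar.mulShift (s : ZMod p) x := by
  simp only [← ZMod.stdAddChar_mulShift_intCast_natCast]
  have := (Fact.out : p.Prime).two_le
  exact sum_filter_Icc_natCast (fun x ↦ orderOf x = p - 1) (by rw [orderOf_zero]; omega) _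

/-- For every `ε > 0` there is `p₀` such that for every prime
`p ≥ p₀` and every integer `s` with `p ∤ s`, the exponential sum over the primitive
roots mod `p` satisfies `|∑_{g ∈ P_p} e^{2πi s g / p}| ≤ p^{1/2 + ε}`; in particular
the normalized Weyl sums satisfy `(1/p)|∑| ≤ p^{ε - 1/2}`, so they tend to `0` and
the primitive roots are equidistributed in `[1, p - 1]`. -/
theorem primitive_roots_equidistributed (ε : ℝ) (hε : 0 < ε) :
    ∃ p₀ : ℕ, ∀ p : ℕ, p.Prime → p₀ ≤ p → ∀ s : ℤ, ¬ (p : ℤ) ∣ s →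
      ‖∑ g ∈ (Finset.Icc 1 (p - 1)).filter
            (fun g : ℕ => orderOf ((g : ZMod p)) = p - 1),
          Complex.exp (2 * Real.pi * Complex.I * (s : ℂ) * (g : ℂ) / (p : ℂ))‖ ≤
        (p : ℝ) ^ ((1 : ℝ) / 2 + ε) ∧
      (1 / (p : ℝ)) * ‖∑ g ∈ (Finset.Icc 1 (p - 1)).filter
            (fun g : ℕ => orderOf ((g : ZMod p)) = p - 1),
          Complex.exp (2 * Real.pi * Complex.I * (s : ℂ) * (g : ℂ) / (p : ℂ))‖ ≤
        (p : ℝ) ^ (ε - 1 / 2) := by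
  obtain ⟨N, hN⟩ := eventually_atTop.1 (Nat.eventually_card_divisors_le_rpow hε)
  refine ⟨N + 1, fun p hp hpN s hs ↦ ?_⟩
  have : Fact p.Prime := ⟨hp⟩
  have hpos : (0 : ℝ) < p := by exact_mod_cast hp.pos
  have hψ : ZMod.stdAddChar.mulShift (s : ZMod p) ≠ 1 :=
    ZMod.isPrimitive_stdAddChar p <| by rwa [Ne, ZMod.intCast_zmod_eq_zero_iff_dvd]
  have hτ : (#(p - 1).divisors : ℝ) ≤ (p : ℝ) ^ ε :=
    (hN _ (by omega)).trans (by gcongr; exact_mod_cast Nat.sub_le p 1)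
  have hbound := calc
    ‖∑ x : ZMod p with orderOf x = p - 1, ZMod.stdAddChar.mulShift (s : ZMod p) x‖
      ≤ #(p - 1).divisors * √(p : ℝ) := by
        simpa using norm_sum_orderOf_eq_addChar_le hψ (n := p - 1) (by have := hp.two_le; omega)
    _ ≤ (p : ℝ) ^ ε * (p : ℝ) ^ ((1 : ℝ) / 2) := by rw [Real.sqrt_eq_rpow]; gcongr
    _ = (p : ℝ) ^ ((1 : ℝ) / 2 + ε) := by rw [← Real.rpow_add hpos, add_comm]
  rw [ZMod.sum_exp_primitiveRoots_eq]
  refine ⟨hbound, ?_⟩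
  calc 1 / (p : ℝ) * _ ≤ (p : ℝ) ^ (-1 : ℝ) * (p : ℝ) ^ ((1 : ℝ) / 2 + ε) := by
        rw [Real.rpow_neg_one, ← one_div]
        gcongr
    _ = (p : ℝ) ^ (ε - 1 / 2) := by rw [← Real.rpow_add hpos]; ring_nf
end
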